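/- arXiv:2107.08535 — 10 statements merged into one kernel-verified Lean document; each statement's English description precedes it below -/
import Mathlib

section
/- Let N ≥ 1 be an integer, let L be a real number with L ≥ 24N, and let μ_1,…,μ_N ∈ ℝ with μ_j < 1 for all j. If (1/N) ∑_{j=1}^N μ_j + (1/(2N)) ∑_{j=1}^N μ_j² + (L/6) ((1/N) ∑_{j=1}^N μ_j²)^{3/2} ≤ 0, then -(1/N) ∑_{j=1}^N log(1 - μ_j) ≤ (1/N) ∑_{j=1}^N μ_j + (1/(2N)) ∑_{j=1}^N μ_j² + (L/6) ((1/N) ∑_{j=1}^N μ_j²)^{3/2}. (Interpretation: with μ_j = ⟨B_j, w - y⟩/⟨B_j, w⟩ this says that for the log-likelihood objective f(w) = -(1/N)∑_j log⟨B_j,w⟩, whenever the cubic-regularized second-order model value at y does not exceed f(w) and the cubic regularization parameter satisfies L ≥ 24N, the sufficient-decrease condition f(y) ≤ Φ_f(y,w) + (L/6)‖y-w‖³_{∇²f(w)} holds; this is the key step showing the adaptive parameters L_k in the cubic Newton method never exceed max{48N, L_0} when the enlarging factor β lies in (1,2).) -/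
open Finset

lemma pointwise_log_bound {x : ℝ} (hx : |x| ≤ 1/2) :
    -Real.log (1 - x) ≤ x + x ^ 2 / 2 + 2 * |x| ^ 3 := by
  have h1 : |x| < 1 := lt_of_le_of_lt hx (by norm_num)
  have key := Real.abs_log_sub_add_sum_range_le h1 2
  have hs : (∑ i ∈ range 2, x ^ (i + 1) / (i + 1)) = x + x ^ 2 / 2 := by
    simp [Finset.sum_range_succ]; ring
  rw [hs] at key
  have h2 : |x| ^ 3 / (1 - |x|) ≤ 2 * |x| ^ 3 := by
    rw [div_le_iff₀ (by linarith)]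
    nlinarith [pow_nonneg (abs_nonneg x) 3, abs_nonneg x]
  have := abs_le.mp key
  linarith

set_option maxHeartbeats 1000000 in
/-- Key step in bounding the adaptive cubic-regularization parameters: if `L ≥ 24 N`
and the cubic-regularized model value does not exceed `f(w)` (scalar reformulation with
`μ_j = ⟨B_j, w - y⟩/⟨B_j, w⟩`), then the sufficient-decrease condition holds. -/
theorem stmt1 (N : ℕ) (hN : 1 ≤ N) (L : ℝ) (hL : 24 * (N : ℝ) ≤ L)
    (μ : Fin N → ℝ) (hμ : ∀ j, μ j < 1)
    (h : (1 / (N : ℝ)) * ∑ j, μ j + (1 / (2 * (N : ℝ))) * ∑ j, μ j ^ 2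
        + (L / 6) * ((1 / (N : ℝ)) * ∑ j, μ j ^ 2) ^ ((3 : ℝ) / 2) ≤ 0) :
    -(1 / (N : ℝ)) * ∑ j, Real.log (1 - μ j) ≤
      (1 / (N : ℝ)) * ∑ j, μ j + (1 / (2 * (N : ℝ))) * ∑ j, μ j ^ 2
        + (L / 6) * ((1 / (N : ℝ)) * ∑ j, μ j ^ 2) ^ ((3 : ℝ) / 2) := by
  have hn1 : (1 : ℝ) ≤ (N : ℝ) := by exact_mod_cast hN
  have hn0 : (0 : ℝ) < (N : ℝ) := by linarith
  set S2 : ℝ := ∑ j, μ j ^ 2 with hS2def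
  have hS2 : 0 ≤ S2 := Finset.sum_nonneg fun j _ => sq_nonneg _
  have hm2 : 0 ≤ 1 / (N : ℝ) * S2 := by positivity
  set s : ℝ := Real.sqrt (1 / (N : ℝ) * S2) with hsdef
  have hs0 : 0 ≤ s := Real.sqrt_nonneg _
  have hssq : s ^ 2 = 1 / (N : ℝ) * S2 := Real.sq_sqrt hm2
  have hrpow : (1 / (N : ℝ) * S2) ^ ((3 : ℝ) / 2) = s ^ 3 := by
    rw [hsdef, Real.sqrt_eq_rpow, ← Real.rpow_natCast ((1 / (N : ℝ) * S2) ^ ((1:ℝ)/2)) 3,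
      ← Real.rpow_mul hm2]
    norm_num
  -- Cauchy-Schwarz: (∑ |μ|)^2 ≤ N * S2
  have hCS : (∑ j, |μ j|) ^ 2 ≤ (N : ℝ) * S2 := by
    have := sq_sum_le_card_mul_sum_sq (s := (Finset.univ : Finset (Fin N)))
      (f := fun j => |μ j|)
    simpa [sq_abs] using this
  have habs_sum : ∑ j, |μ j| ≤ (N : ℝ) * s := by
    have h1 : ((N : ℝ) * s) ^ 2 = (N : ℝ) * S2 := by
      rw [mul_pow, hssq]; field_simp
    have h2 : (∑ j, |μ j|) ^ 2 ≤ ((N : ℝ) * s) ^ 2 := by rw [h1]; exact hCS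
    have h3 : 0 ≤ ∑ j, |μ j| := Finset.sum_nonneg fun j _ => abs_nonneg _
    have h4 : 0 ≤ (N : ℝ) * s := by positivity
    nlinarith
  have hsum_le : -(∑ j, μ j) ≤ ∑ j, |μ j| := by
    rw [← Finset.sum_neg_distrib]
    exact Finset.sum_le_sum fun j _ => neg_le_abs _
  -- From h: (L/6) s^3 ≤ -(1/N) ∑ μ ≤ s
  have hkey : L / 6 * s ^ 3 ≤ s := by
    rw [hrpow] at h
    have hstep : L / 6 * s ^ 3 ≤ -(1 / (N : ℝ) * ∑ j, μ j) := by
      have hb : 0 ≤ 1 / (2 * (N : ℝ)) * S2 := by positivity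
      linarith
    calc L / 6 * s ^ 3 ≤ -(1 / (N : ℝ) * ∑ j, μ j) := hstep
      _ ≤ 1 / (N : ℝ) * ∑ j, |μ j| := by
          rw [← mul_neg]
          exact mul_le_mul_of_nonneg_left hsum_le (by positivity)
      _ ≤ 1 / (N : ℝ) * ((N : ℝ) * s) := mul_le_mul_of_nonneg_left habs_sum (by positivity)
      _ = s := by field_simp
  have hL0 : (0 : ℝ) < L := by linarith
  -- s^2 ≤ 1/(4N)
  have hs2_small : s ^ 2 ≤ 1 / (4 * (N : ℝ)) := by
    rcases eq_or_lt_of_le hs0 with hs | hs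
    · rw [← hs]
      norm_num
    · have h1 : L / 6 * s ^ 2 ≤ 1 := by nlinarith
      have h2 : 4 * (N : ℝ) * s ^ 2 ≤ 1 := by nlinarith
      rw [le_div_iff₀ (by positivity)]
      linarith
  have hS2_small : S2 ≤ 1 / 4 := by
    have h1 : 1 / (N : ℝ) * S2 ≤ 1 / (4 * (N : ℝ)) := hssq ▸ hs2_small
    have h2 := mul_le_mul_of_nonneg_left h1 (le_of_lt hn0)
    have e1 : (N : ℝ) * (1 / (N : ℝ) * S2) = S2 := by field_simp
    have e2 : (N : ℝ) * (1 / (4 * (N : ℝ))) = 1 / 4 := by field_simp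
    rw [e1, e2] at h2
    exact h2
  have habs_half : ∀ j, |μ j| ≤ 1 / 2 := by
    intro j
    have h1 : μ j ^ 2 ≤ S2 := Finset.single_le_sum (f := fun j => μ j ^ 2)
      (fun j _ => sq_nonneg _) (Finset.mem_univ j)
    nlinarith [abs_nonneg (μ j), sq_abs (μ j)]
  -- pointwise bounds summed
  have hsum_log : -(∑ j, Real.log (1 - μ j)) ≤
      ∑ j, μ j + S2 / 2 + 2 * ∑ j, |μ j| ^ 3 := by
    have h0 := Finset.sum_le_sum (s := (Finset.univ : Finset (Fin N)))
      (f := fun j => -Real.log (1 - μ j))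
      (g := fun j => μ j + μ j ^ 2 / 2 + 2 * |μ j| ^ 3)
      (fun j _ => pointwise_log_bound (habs_half j))
    have e1 : ∑ j, μ j ^ 2 / 2 = S2 / 2 := by rw [hS2def, Finset.sum_div]
    have e2 : (∑ j, 2 * |μ j| ^ 3) = 2 * ∑ j, |μ j| ^ 3 := by rw [Finset.mul_sum]
    simp only [Finset.sum_add_distrib, Finset.sum_neg_distrib] at h0
    rw [e1, e2] at h0
    exact h0
  have hsqrtN : Real.sqrt (N : ℝ) ≤ (N : ℝ) := by
    have h1 : Real.sqrt (N : ℝ) ≤ Real.sqrt ((N : ℝ) ^ 2) := Real.sqrt_le_sqrt (by nlinarith)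
    rwa [Real.sqrt_sq (le_of_lt hn0)] at h1
  -- ∑ |μ|^3 ≤ N * √N * s^3
  have hcube : ∑ j, |μ j| ^ 3 ≤ (N : ℝ) * Real.sqrt (N : ℝ) * s ^ 3 := by
    have hS2eq : S2 = (N : ℝ) * s ^ 2 := by rw [hssq]; field_simp
    have hsqrtS2 : Real.sqrt S2 = Real.sqrt (N : ℝ) * s := by
      rw [hS2eq, Real.sqrt_mul (by positivity), Real.sqrt_sq hs0]
    have hstep : ∀ j, |μ j| ^ 3 ≤ Real.sqrt S2 * μ j ^ 2 := by
      intro j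
      have h1 : μ j ^ 2 ≤ S2 := Finset.single_le_sum (f := fun j => μ j ^ 2)
        (fun j _ => sq_nonneg _) (Finset.mem_univ j)
      have h2 : |μ j| ≤ Real.sqrt S2 := by
        rw [← Real.sqrt_sq_eq_abs]
        exact Real.sqrt_le_sqrt h1
      calc |μ j| ^ 3 = |μ j| * μ j ^ 2 := by rw [← sq_abs]; ring
        _ ≤ Real.sqrt S2 * μ j ^ 2 := mul_le_mul_of_nonneg_right h2 (sq_nonneg _)
    calc ∑ j, |μ j| ^ 3 ≤ ∑ j, Real.sqrt S2 * μ j ^ 2 :=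
          Finset.sum_le_sum fun j _ => hstep j
      _ = Real.sqrt S2 * S2 := by rw [← Finset.mul_sum]
      _ = (N : ℝ) * Real.sqrt (N : ℝ) * s ^ 3 := by
          rw [hsqrtS2, hS2eq]; ring
  have hs3 : 0 ≤ s ^ 3 := pow_nonneg hs0 3
  have h12 : 12 * Real.sqrt (N : ℝ) ≤ L := by linarith
  have hfinal : 2 * ∑ j, |μ j| ^ 3 ≤ (N : ℝ) * (L / 6 * s ^ 3) := by
    have hprod : 0 ≤ (N : ℝ) * s ^ 3 * (L - 12 * Real.sqrt (N : ℝ)) :=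
      mul_nonneg (mul_nonneg (le_of_lt hn0) hs3) (by linarith)
    nlinarith [hcube]
  rw [hrpow]
  have e1 : -(1 / (N : ℝ)) * ∑ j, Real.log (1 - μ j)
      = 1 / (N : ℝ) * (-(∑ j, Real.log (1 - μ j))) := by ring
  have hmul : 1 / (N : ℝ) * (-(∑ j, Real.log (1 - μ j)))
      ≤ 1 / (N : ℝ) * (∑ j, μ j + S2 / 2 + 2 * ∑ j, |μ j| ^ 3) :=
    mul_le_mul_of_nonneg_left hsum_log (by positivity)
  have e2 : 1 / (N : ℝ) * (∑ j, μ j + S2 / 2 + 2 * ∑ j, |μ j| ^ 3)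
      = 1 / (N : ℝ) * ∑ j, μ j + 1 / (2 * (N : ℝ)) * S2
        + 1 / (N : ℝ) * (2 * ∑ j, |μ j| ^ 3) := by
    field_simp
  have e3 : 1 / (N : ℝ) * (2 * ∑ j, |μ j| ^ 3) ≤ L / 6 * s ^ 3 := by
    have h5 := mul_le_mul_of_nonneg_left hfinal (le_of_lt (one_div_pos.mpr hn0))
    have e4 : 1 / (N : ℝ) * ((N : ℝ) * (L / 6 * s ^ 3)) = L / 6 * s ^ 3 := by
      field_simp
    rw [e4] at h5
    exact h5
  rw [e1]
  calc 1 / (N : ℝ) * (-(∑ j, Real.log (1 - μ j)))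
      ≤ 1 / (N : ℝ) * (∑ j, μ j + S2 / 2 + 2 * ∑ j, |μ j| ^ 3) := hmul
    _ = 1 / (N : ℝ) * ∑ j, μ j + 1 / (2 * (N : ℝ)) * S2
        + 1 / (N : ℝ) * (2 * ∑ j, |μ j| ^ 3) := e2
    _ ≤ 1 / (N : ℝ) * ∑ j, μ j + 1 / (2 * (N : ℝ)) * S2 + L / 6 * s ^ 3 := by linarith
end

section
/- (Global sublinear convergence of the cubic-regularized Newton method.) Let B ∈ ℝ^{M×N} have nonnegative entries with columns B_j, and let 𝒞 be a nonempty compact convex subset of {w ∈ Δ_M : ⟨B_j, w⟩ > 0 for all j}. Let f(w) = -(1/N)∑_{j=1}^N log⟨B_j,w⟩, let f* = min_{w∈𝒞} f(w) be attained at w* ∈ 𝒞, and let H, Φ_f, ‖·‖_A be as in the context. Suppose (w^k)_{k≥0} ⊆ 𝒞 is a sequence with f(w^k) ≤ f(w⁰) for all k ≥ 0, and suppose there exist nonnegative reals E_k and reals L_k with 0 ≤ L_k ≤ L̄ such that for every k ≥ 1, f(w^{k+1}) ≤ inf_{y∈𝒞} { Φ_f(y, w^k) + (L_k/6) ‖y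 - w^k‖³_{H(w^k)} } + E_k. Define C₁ = sup { (1/N) ∑_{i=1}^N max( |⟨B_i, w-w*⟩/⟨B_i,w⟩|³ , |⟨B_i, w-w*⟩/⟨B_i,w*⟩|³ ) : w ∈ 𝒞, f(w) ≤ f(w⁰) } and C = max{ (1 + L̄/2) C₁ / 3 , f(w⁰) - f* }. Then for every k ≥ 2, f(w^{k+1}) - f* ≤ 30C/(k+2)² + (1/(k+1)³) ∑_{i=1}^k (i+3)³ E_i. -/
open Finset

private lemma logDeriv3 (x : ℝ) (hx : -1 < x) :
    HasDerivAt (fun y : ℝ => Real.log (1 + y)) ((1 + x)⁻¹) x := by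
  have h1 : HasDerivAt (fun y : ℝ => 1 + y) 1 x := by
    simpa using (hasDerivAt_id x).const_add 1
  have := (Real.hasDerivAt_log (by linarith : (1:ℝ) + x ≠ 0)).comp x h1
  rw [mul_one] at this
  exact this

private lemma aux_log_cubic {t : ℝ} (ht : -1 < t) :
    Real.log (1 + t) ≤ t - t ^ 2 / 2 + |t| ^ 3 / 3 := by
  rcases le_or_gt 0 t with h0 | h0
  · rw [abs_of_nonneg h0]
    set F : ℝ → ℝ := fun y => y - y ^ 2 / 2 + y ^ 3 / 3 - Real.log (1 + y) with hF
    have hd : ∀ x : ℝ, -1 < x → HasDerivAt F (1 - x + x ^ 2 - (1 + x)⁻¹) x := by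
      intro x hx
      have h3 : HasDerivAt (fun y : ℝ => y - y ^ 2 / 2 + y ^ 3 / 3) (1 - x + x ^ 2) x := by
        have := ((hasDerivAt_id x).sub ((hasDerivAt_pow 2 x).div_const 2)).add
          ((hasDerivAt_pow 3 x).div_const 3)
        exact this.congr_deriv (by norm_num <;> ring)
      exact h3.sub (logDeriv3 x hx)
    have hmono : MonotoneOn F (Set.Icc 0 t) := by
      apply monotoneOn_of_deriv_nonneg (convex_Icc 0 t)
      · intro x hx
        exact (hd x (by linarith [hx.1])).differentiableAt.continuousAt.continuousWithinAt
      · intro x hx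
        rw [interior_Icc] at hx
        exact ((hd x (by linarith [hx.1])).differentiableAt).differentiableWithinAt
      · intro x hx
        rw [interior_Icc] at hx
        rw [(hd x (by linarith [hx.1])).deriv]
        have hx0 : 0 < x := hx.1
        have h1x : (0:ℝ) < 1 + x := by linarith
        have hu : (1 + x)⁻¹ * (1 + x) = 1 := inv_mul_cancel₀ (ne_of_gt h1x)
        nlinarith [mul_pos (mul_pos hx0 hx0) hx0, inv_nonneg.mpr h1x.le]
      -- done
    have := hmono (Set.left_mem_Icc.2 h0) (Set.right_mem_Icc.2 h0) h0
    have hF0 : F 0 = 0 := by simp [hF]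
    rw [hF0] at this
    simp only [hF] at this
    linarith
  · rw [abs_of_neg h0]
    set F : ℝ → ℝ := fun y => y - y ^ 2 / 2 - y ^ 3 / 3 - Real.log (1 + y) with hF
    have hd : ∀ x : ℝ, -1 < x → HasDerivAt F (1 - x - x ^ 2 - (1 + x)⁻¹) x := by
      intro x hx
      have h3 : HasDerivAt (fun y : ℝ => y - y ^ 2 / 2 - y ^ 3 / 3) (1 - x - x ^ 2) x := by
        have := ((hasDerivAt_id x).sub ((hasDerivAt_pow 2 x).div_const 2)).sub
          ((hasDerivAt_pow 3 x).div_const 3)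
        exact this.congr_deriv (by norm_num <;> ring)
      exact h3.sub (logDeriv3 x hx)
    have hanti : AntitoneOn F (Set.Icc t 0) := by
      apply antitoneOn_of_deriv_nonpos (convex_Icc t 0)
      · intro x hx
        exact (hd x (by linarith [hx.1])).differentiableAt.continuousAt.continuousWithinAt
      · intro x hx
        rw [interior_Icc] at hx
        exact ((hd x (by linarith [hx.1])).differentiableAt).differentiableWithinAt
      · intro x hx
        rw [interior_Icc] at hx
        rw [(hd x (by linarith [hx.1])).deriv]
        have hxm : -1 < x := by linarith [hx.1]
        have hx0 : x < 0 := hx.2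
        have h1x : (0:ℝ) < 1 + x := by linarith
        have hu : (1 + x)⁻¹ * (1 + x) = 1 := inv_mul_cancel₀ (ne_of_gt h1x)
        nlinarith [sq_nonneg x, inv_nonneg.mpr h1x.le]
    have := hanti (Set.left_mem_Icc.2 h0.le) (Set.right_mem_Icc.2 h0.le) h0.le
    have hF0 : F 0 = 0 := by simp [hF]
    rw [hF0] at this
    simp only [hF] at this
    linarith


private lemma aux_pm {N : ℕ} (hN : 0 < N) (x : Fin N → ℝ) :
    Real.sqrt ((1 / (N:ℝ)) * ∑ j, (x j) ^ 2) ^ 3 ≤ (1 / (N:ℝ)) * ∑ j, |x j| ^ 3 := by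
  have hNr : (0:ℝ) < (N:ℝ) := by exact_mod_cast hN
  have hQ : (0:ℝ) ≤ (1 / (N:ℝ)) * ∑ j, (x j) ^ 2 := by positivity
  have h1 : Real.sqrt ((1 / (N:ℝ)) * ∑ j, (x j) ^ 2) ^ 3
      = ((1 / (N:ℝ)) * ∑ j, (x j) ^ 2) ^ (3/2 : ℝ) := by
    rw [Real.sqrt_eq_rpow, ← Real.rpow_natCast (_ ^ (1/2:ℝ)) 3, ← Real.rpow_mul hQ]
    norm_num
  have h2 := Real.rpow_arith_mean_le_arith_mean_rpow Finset.univ (fun _ : Fin N => 1 / (N:ℝ))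
    (fun j => (x j) ^ 2) (fun i _ => by positivity)
    (by simp [Finset.card_univ]; field_simp) (fun i _ => sq_nonneg _)
    (by norm_num : (1:ℝ) ≤ 3/2)
  have h3 : ∀ j : Fin N, ((x j) ^ 2 : ℝ) ^ (3/2 : ℝ) = |x j| ^ 3 := by
    intro j
    rw [← sq_abs, ← Real.rpow_natCast |x j| 2, ← Real.rpow_mul (abs_nonneg _),
      show ((2:ℕ):ℝ) * (3/2) = ((3:ℕ):ℝ) by norm_num, Real.rpow_natCast]
  calc Real.sqrt ((1 / (N:ℝ)) * ∑ j, (x j) ^ 2) ^ 3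
      = ((1 / (N:ℝ)) * ∑ j, (x j) ^ 2) ^ (3/2 : ℝ) := h1
    _ = (∑ j, (1 / (N:ℝ)) * (x j) ^ 2) ^ (3/2 : ℝ) := by rw [Finset.mul_sum]
    _ ≤ ∑ j, (1 / (N:ℝ)) * ((x j) ^ 2) ^ (3/2 : ℝ) := h2
    _ = (1 / (N:ℝ)) * ∑ j, |x j| ^ 3 := by
        rw [← Finset.mul_sum]; congr 1; exact Finset.sum_congr rfl fun j _ => by rw [h3]

private lemma aux_concave_step {a b α : ℝ} (ha : 0 < a) (hb : 0 < b) (h0 : 0 ≤ α) (h1 : α ≤ 1) :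
    (1 - α) * Real.log a + α * Real.log b ≤
      Real.log a + α * ((b - a) / a) - (α * ((b - a) / a)) ^ 2 / 2
        + |α * ((b - a) / a)| ^ 3 / 3 := by
  have hcomb : 0 < (1 - α) * a + α * b := by
    rcases le_total a b with h | h
    · nlinarith
    · nlinarith
  have ht : -1 < α * ((b - a) / a) := by
    have : 1 + α * ((b - a) / a) = ((1 - α) * a + α * b) / a := by field_simp; ring
    nlinarith [div_pos hcomb ha, this]
  have hconc := (strictConcaveOn_log_Ioi.concaveOn).2 (Set.mem_Ioi.2 ha) (Set.mem_Ioi.2 hb)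
    (by linarith : (0:ℝ) ≤ 1 - α) h0 (by ring)
  simp only [smul_eq_mul] at hconc
  have hkey : Real.log ((1 - α) * a + α * b)
      = Real.log a + Real.log (1 + α * ((b - a) / a)) := by
    rw [← Real.log_mul (ne_of_gt ha) (by nlinarith : (1 + α * ((b - a) / a)) ≠ 0)]
    congr 1
    field_simp
    ring
  have hlc := aux_log_cubic ht
  linarith [hconc, hkey, hlc]

private lemma aux_rec (δ E : ℕ → ℝ) (Cc : ℝ) (hCc : 0 ≤ Cc) (hE : ∀ k, 0 ≤ E k)
    (hpos : ∀ k, 0 ≤ δ k) (h1 : δ 1 ≤ Cc)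
    (hrec : ∀ k, 1 ≤ k → ∀ α : ℝ, 0 ≤ α → α ≤ 1 →
      δ (k + 1) ≤ (1 - α) * δ k + α ^ 3 * Cc + E k) :
    ∀ k : ℕ, 1 ≤ k → ((k:ℝ) + 3) ^ 3 * δ (k + 1) ≤
      27 * Cc * ((k:ℝ) + 1) + ∑ i ∈ Finset.Icc 1 k, ((i:ℝ) + 3) ^ 3 * E i := by
  intro k hk
  induction k, hk using Nat.le_induction with
  | base =>
    have h := hrec 1 le_rfl (3/4) (by norm_num) (by norm_num)
    simp only [Nat.cast_one]
    rw [show Finset.Icc 1 1 = {1} from rfl, Finset.sum_singleton]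
    norm_num at h ⊢
    nlinarith [hE 1]
  | succ k hk ih =>
    have hα0 : (0:ℝ) ≤ 3 / ((k:ℝ) + 4) := by positivity
    have hkr : (0:ℝ) ≤ (k:ℝ) := Nat.cast_nonneg k
    have hα1 : 3 / ((k:ℝ) + 4) ≤ 1 := by
      rw [div_le_one (by linarith)]; linarith
    have h := hrec (k + 1) (by omega) (3 / ((k:ℝ) + 4)) hα0 hα1
    have hc4 : (0:ℝ) < (k:ℝ) + 4 := by linarith
    push_cast at h ih ⊢
    rw [Finset.sum_Icc_succ_top (by omega : 1 ≤ k + 1)]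
    have e1 : (1 - 3 / ((k:ℝ) + 4)) = ((k:ℝ) + 1) / ((k:ℝ) + 4) := by field_simp; ring
    have e2 : (3 / ((k:ℝ) + 4)) ^ 3 = 27 / ((k:ℝ) + 4) ^ 3 := by rw [div_pow]; norm_num
    rw [e1, e2] at h
    -- multiply h by ((k:ℝ)+4)^3
    have hmul : ((k:ℝ) + 4) ^ 3 * δ (k + 1 + 1) ≤
        ((k:ℝ) + 1) * ((k:ℝ) + 4) ^ 2 * δ (k + 1) + 27 * Cc + ((k:ℝ) + 4) ^ 3 * E (k + 1) := by
      have := mul_le_mul_of_nonneg_left h (by positivity : (0:ℝ) ≤ ((k:ℝ) + 4) ^ 3)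
      calc ((k:ℝ) + 4) ^ 3 * δ (k + 1 + 1)
          ≤ ((k:ℝ) + 4) ^ 3 * (((k:ℝ) + 1) / ((k:ℝ) + 4) * δ (k + 1)
              + 27 / ((k:ℝ) + 4) ^ 3 * Cc + E (k + 1)) := this
        _ = ((k:ℝ) + 1) * ((k:ℝ) + 4) ^ 2 * δ (k + 1) + 27 * Cc + ((k:ℝ) + 4) ^ 3 * E (k + 1) := by
            field_simp
    have hcube : ((k:ℝ) + 1) * ((k:ℝ) + 4) ^ 2 ≤ ((k:ℝ) + 3) ^ 3 := by nlinarith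
    have hδ := hpos (k + 1)
    push_cast
    nlinarith [mul_le_mul_of_nonneg_right hcube hδ]

/-- Global sublinear convergence of the cubic-regularized Newton method for
`f(w) = -(1/N) ∑_j log⟨B_j, w⟩` over a compact convex polyhedral subset of the simplex:
if each iterate approximately solves the cubic-regularized subproblem up to tolerance `E_k`,
then `f(w^{k+1}) - f* ≤ 30C/(k+2)² + (1/(k+1)³) ∑_{i=1}^k (i+3)³ E_i` for all `k ≥ 2`. -/
theorem stmt3 (M N : ℕ) (hM : 0 < M) (hN : 0 < N)
    (B : Fin M → Fin N → ℝ) (hB : ∀ i j, 0 ≤ B i j)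
    (C : Set (Fin M → ℝ)) (hCne : C.Nonempty) (hCcomp : IsCompact C) (hCconv : Convex ℝ C)
    (hCsub : C ⊆ {w | (∑ i, w i = 1 ∧ ∀ i, 0 ≤ w i) ∧ ∀ j : Fin N, 0 < ∑ i, B i j * w i})
    (f : (Fin M → ℝ) → ℝ)
    (hf : f = fun w => -(1 / (N : ℝ)) * ∑ j, Real.log (∑ i, B i j * w i))
    (Φ : (Fin M → ℝ) → (Fin M → ℝ) → ℝ)
    (hΦ : Φ = fun y w => f w
        - (1 / (N : ℝ)) * ∑ j, (∑ i, B i j * (y i - w i)) / (∑ i, B i j * w i)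
        + (1 / (2 * (N : ℝ))) * ∑ j, ((∑ i, B i j * (y i - w i)) / (∑ i, B i j * w i)) ^ 2)
    (nrm : (Fin M → ℝ) → (Fin M → ℝ) → ℝ)
    (hnrm : nrm = fun u w =>
        Real.sqrt ((1 / (N : ℝ)) * ∑ j, ((∑ i, B i j * u i) / (∑ i, B i j * w i)) ^ 2))
    (wstar : Fin M → ℝ) (hwstar : wstar ∈ C) (hmin : ∀ v ∈ C, f wstar ≤ f v)
    (w : ℕ → (Fin M → ℝ)) (hw : ∀ k, w k ∈ C) (hdecr : ∀ k, f (w k) ≤ f (w 0))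
    (E : ℕ → ℝ) (hE : ∀ k, 0 ≤ E k)
    (L : ℕ → ℝ) (Lbar : ℝ) (hL : ∀ k, 0 ≤ L k ∧ L k ≤ Lbar)
    (hstep : ∀ k : ℕ, 1 ≤ k →
      f (w (k + 1)) ≤
        sInf ((fun y => Φ y (w k) + (L k / 6) * (nrm (y - w k) (w k)) ^ 3) '' C) + E k)
    (C1 : ℝ)
    (hC1 : C1 = sSup ((fun v => (1 / (N : ℝ)) * ∑ j,
        max (|(∑ i, B i j * (v i - wstar i)) / (∑ i, B i j * v i)| ^ 3)
            (|(∑ i, B i j * (v i - wstar i)) / (∑ i, B i j * wstar i)| ^ 3))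
        '' {v ∈ C | f v ≤ f (w 0)}))
    (Cc : ℝ) (hCc : Cc = max ((1 + Lbar / 2) * C1 / 3) (f (w 0) - f wstar)) :
    ∀ k : ℕ, 2 ≤ k →
      f (w (k + 1)) - f wstar ≤ 30 * Cc / ((k : ℝ) + 2) ^ 2
        + (1 / ((k : ℝ) + 1) ^ 3) * ∑ i ∈ Finset.Icc 1 k, ((i : ℝ) + 3) ^ 3 * E i := by
  have hKpos : (0:ℝ) < (N:ℝ) := by exact_mod_cast hN
  have hLbar : 0 ≤ Lbar := le_trans (hL 0).1 (hL 0).2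
  -- the C1 functional
  set F : (Fin M → ℝ) → ℝ := fun v => (1 / (N : ℝ)) * ∑ j,
      max (|(∑ i, B i j * (v i - wstar i)) / (∑ i, B i j * v i)| ^ 3)
          (|(∑ i, B i j * (v i - wstar i)) / (∑ i, B i j * wstar i)| ^ 3) with hFdef
  have hFcont : ContinuousOn F C := by
    apply ContinuousOn.mul continuousOn_const
    apply continuousOn_finset_sum
    intro j _
    have hnumc : ContinuousOn (fun v : Fin M → ℝ => ∑ i, B i j * (v i - wstar i)) C :=
      (continuous_finset_sum _ fun i _ =>
        continuous_const.mul ((continuous_apply i).sub continuous_const)).continuousOn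
    have hdenc : ContinuousOn (fun v : Fin M → ℝ => ∑ i, B i j * v i) C :=
      (continuous_finset_sum _ fun i _ =>
        continuous_const.mul (continuous_apply i)).continuousOn
    exact ContinuousOn.sup
      ((hnumc.div hdenc fun v hv => ne_of_gt ((hCsub hv).2 j)).abs.pow 3)
      (((continuous_finset_sum _ fun i _ =>
        continuous_const.mul ((continuous_apply i).sub continuous_const)).div_const
          _).abs.pow 3).continuousOn
  have hFbdd : BddAbove (F '' {v ∈ C | f v ≤ f (w 0)}) :=
    ((hCcomp.image_of_continuousOn hFcont).bddAbove).mono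
      (Set.image_mono (Set.sep_subset _ _))
  have hC1mem : ∀ v, v ∈ C → f v ≤ f (w 0) → F v ≤ C1 := by
    intro v hv hfv
    rw [hC1]
    exact le_csSup hFbdd ⟨v, ⟨hv, hfv⟩, rfl⟩
  have hFnonneg : ∀ v, 0 ≤ F v := by
    intro v
    apply mul_nonneg (by positivity)
    exact Finset.sum_nonneg fun j _ => le_trans (by positivity) (le_max_left _ _)
  have hC1nonneg : 0 ≤ C1 := le_trans (hFnonneg (w 0)) (hC1mem (w 0) (hw 0) le_rfl)
  have hCc0 : 0 ≤ Cc := by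
    rw [hCc]
    exact le_trans (sub_nonneg.2 (hmin (w 0) (hw 0))) (le_max_right _ _)
  set δ : ℕ → ℝ := fun k => f (w k) - f wstar with hδdef
  have hδpos : ∀ k, 0 ≤ δ k := fun k => sub_nonneg.2 (hmin _ (hw k))
  have hδ1 : δ 1 ≤ Cc := by
    rw [hCc]
    exact le_trans (sub_le_sub_right (hdecr 1) _) (le_max_right _ _)
  -- the key recursion
  have hrec : ∀ m, 1 ≤ m → ∀ α : ℝ, 0 ≤ α → α ≤ 1 →
      δ (m + 1) ≤ (1 - α) * δ m + α ^ 3 * Cc + E m := by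
    intro m hm1 α hα0 hα1
    set a : Fin N → ℝ := fun j => ∑ i, B i j * w m i with hadef
    set b : Fin N → ℝ := fun j => ∑ i, B i j * wstar i with hbdef
    have hapos : ∀ j, 0 < a j := fun j => (hCsub (hw m)).2 j
    have hbpos : ∀ j, 0 < b j := fun j => (hCsub hwstar).2 j
    set s : Fin N → ℝ := fun j => (b j - a j) / a j with hsdef
    set t : Fin N → ℝ := fun j => α * s j with htdef
    set y' : Fin M → ℝ := (1 - α) • w m + α • wstar with hy'def
    have hy'C : y' ∈ C := hCconv (hw m) hwstar (by linarith) hα0 (by ring)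
    have hy'i : ∀ i, y' i = w m i + α * (wstar i - w m i) := by
      intro i
      simp only [hy'def, Pi.add_apply, Pi.smul_apply, smul_eq_mul]
      ring
    have hglin : ∀ j, (∑ i, B i j * (y' i - w m i)) = α * (b j - a j) := by
      intro j
      have h1 : ∀ i, B i j * (y' i - w m i)
          = α * (B i j * wstar i) - α * (B i j * w m i) := by
        intro i; rw [hy'i i]; ring
      rw [Finset.sum_congr rfl fun i _ => h1 i, Finset.sum_sub_distrib,
        ← Finset.mul_sum, ← Finset.mul_sum]
      simp only [hadef, hbdef]
      ring
    have hratio : ∀ j, (∑ i, B i j * (y' i - w m i)) / (∑ i, B i j * w m i) = t j := by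
      intro j
      rw [hglin j]
      simp only [htdef, hsdef, hadef]
      rw [mul_div_assoc]
    -- Step A : use hstep and csInf_le
    have hcont : Continuous
        (fun y : Fin M → ℝ => Φ y (w m) + (L m / 6) * (nrm (y - w m) (w m)) ^ 3) := by
      rw [hΦ, hnrm]
      simp only [Pi.sub_apply]
      fun_prop
    have hBddB : BddBelow
        ((fun y => Φ y (w m) + (L m / 6) * (nrm (y - w m) (w m)) ^ 3) '' C) :=
      (hCcomp.image_of_continuousOn hcont.continuousOn).bddBelow
    have hA : f (w (m + 1)) ≤ Φ y' (w m) + (L m / 6) * (nrm (y' - w m) (w m)) ^ 3 + E m :=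
      le_trans (hstep m hm1) (add_le_add_left (csInf_le hBddB ⟨y', hy'C, rfl⟩) _)
    -- Φ value
    have hfm : f (w m) = -(1 / (N:ℝ)) * ∑ j, Real.log (a j) := by rw [hf]
    have hfstar : f wstar = -(1 / (N:ℝ)) * ∑ j, Real.log (b j) := by rw [hf]
    have hΦval : Φ y' (w m) = -(1 / (N:ℝ)) * ∑ j, Real.log (a j)
        - (1 / (N:ℝ)) * ∑ j, t j + (1 / (2 * (N:ℝ))) * ∑ j, (t j) ^ 2 := by
      have e1 : ∑ j, (∑ i, B i j * (y' i - w m i)) / (∑ i, B i j * w m i) = ∑ j, t j :=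
        Finset.sum_congr rfl fun j _ => hratio j
      have e2 : ∑ j, ((∑ i, B i j * (y' i - w m i)) / (∑ i, B i j * w m i)) ^ 2
          = ∑ j, (t j) ^ 2 :=
        Finset.sum_congr rfl fun j _ => by rw [hratio j]
      simp only [hΦ]
      rw [e1, e2, hfm]
    -- per-j concavity bound, summed
    have hsum : ∑ j, ((1 - α) * Real.log (a j) + α * Real.log (b j))
        ≤ ∑ j, (Real.log (a j) + t j - (t j) ^ 2 / 2 + |t j| ^ 3 / 3) :=
      Finset.sum_le_sum fun j _ => aux_concave_step (hapos j) (hbpos j) hα0 hα1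
    have hsplit1 : ∑ j, ((1 - α) * Real.log (a j) + α * Real.log (b j))
        = (1 - α) * ∑ j, Real.log (a j) + α * ∑ j, Real.log (b j) := by
      rw [Finset.sum_add_distrib, Finset.mul_sum, Finset.mul_sum]
    have hsplit2 : ∑ j, (Real.log (a j) + t j - (t j) ^ 2 / 2 + |t j| ^ 3 / 3)
        = ∑ j, Real.log (a j) + ∑ j, t j - (∑ j, (t j) ^ 2) / 2 + (∑ j, |t j| ^ 3) / 3 := by
      simp only [Finset.sum_add_distrib, Finset.sum_sub_distrib, ← Finset.sum_div]
    rw [hsplit1, hsplit2] at hsum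
    have hsum2 := mul_le_mul_of_nonneg_left hsum (by positivity : (0:ℝ) ≤ 1 / (N:ℝ))
    -- cubic sums
    have hS3eq : ∑ j, |t j| ^ 3 = α ^ 3 * ∑ j, |s j| ^ 3 := by
      rw [Finset.mul_sum]
      refine Finset.sum_congr rfl fun j _ => ?_
      rw [show t j = α * s j from rfl, abs_mul, abs_of_nonneg hα0, mul_pow]
    have hsC1 : (1 / (N:ℝ)) * ∑ j, |s j| ^ 3 ≤ C1 := by
      refine le_trans ?_ (hC1mem (w m) (hw m) (hdecr m))
      rw [hFdef]
      refine mul_le_mul_of_nonneg_left (Finset.sum_le_sum fun j _ => ?_) (by positivity)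
      refine le_trans (le_of_eq ?_) (le_max_left _ _)
      have hnum : ∑ i, B i j * (w m i - wstar i) = a j - b j := by
        have h1 : ∀ i, B i j * (w m i - wstar i)
            = B i j * w m i - B i j * wstar i := fun i => by ring
        rw [Finset.sum_congr rfl fun i _ => h1 i, Finset.sum_sub_distrib]
      rw [hnum]
      show |(b j - a j) / a j| ^ 3 = |(a j - b j) / a j| ^ 3
      rw [abs_div, abs_div, abs_sub_comm]
    -- norm bound
    have hnval : nrm (y' - w m) (w m) = Real.sqrt ((1 / (N:ℝ)) * ∑ j, (t j) ^ 2) := by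
      simp only [hnrm, Pi.sub_apply]
      congr 2
      exact Finset.sum_congr rfl fun j _ => by rw [hratio j]
    have hteq2 : ∑ j, (t j) ^ 2 = α ^ 2 * ∑ j, (s j) ^ 2 := by
      rw [Finset.mul_sum]
      exact Finset.sum_congr rfl fun j _ => mul_pow α (s j) 2
    have hnval2 : nrm (y' - w m) (w m) = α * Real.sqrt ((1 / (N:ℝ)) * ∑ j, (s j) ^ 2) := by
      rw [hnval, hteq2, show (1 / (N:ℝ)) * (α ^ 2 * ∑ j, (s j) ^ 2)
        = α ^ 2 * ((1 / (N:ℝ)) * ∑ j, (s j) ^ 2) by ring,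
        Real.sqrt_mul (sq_nonneg α), Real.sqrt_sq hα0]
    have hnrm3 : (nrm (y' - w m) (w m)) ^ 3 ≤ α ^ 3 * ((1 / (N:ℝ)) * ∑ j, |s j| ^ 3) := by
      rw [hnval2, mul_pow]
      exact mul_le_mul_of_nonneg_left (aux_pm hN s) (by positivity)
    have hnrm3' : (nrm (y' - w m) (w m)) ^ 3 ≤ α ^ 3 * C1 :=
      le_trans hnrm3 (mul_le_mul_of_nonneg_left hsC1 (by positivity))
    have hnrmnn : 0 ≤ (nrm (y' - w m) (w m)) ^ 3 := by
      rw [hnval2]; positivity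
    have hh1 : (L m / 6) * (nrm (y' - w m) (w m)) ^ 3 ≤ (Lbar / 6) * (α ^ 3 * C1) := by
      apply mul_le_mul (by linarith [(hL m).2]) hnrm3' hnrmnn (by linarith)
    have h5 : (1 / (N:ℝ)) * (∑ j, |t j| ^ 3) ≤ α ^ 3 * C1 := by
      rw [hS3eq]
      calc (1 / (N:ℝ)) * (α ^ 3 * ∑ j, |s j| ^ 3)
          = α ^ 3 * ((1 / (N:ℝ)) * ∑ j, |s j| ^ 3) := by ring
        _ ≤ α ^ 3 * C1 := mul_le_mul_of_nonneg_left hsC1 (by positivity)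
    have h6 : α ^ 3 * ((1 + Lbar / 2) * C1 / 3) ≤ α ^ 3 * Cc :=
      mul_le_mul_of_nonneg_left (hCc ▸ le_max_left _ _) (by positivity)
    have hΦval2 : Φ y' (w m) = -(1 / (N:ℝ)) * ∑ j, Real.log (a j)
        - (1 / (N:ℝ)) * ∑ j, t j + (1 / (N:ℝ)) * ((∑ j, (t j) ^ 2) / 2) := by
      rw [hΦval]; ring
    show f (w (m + 1)) - f wstar ≤ (1 - α) * (f (w m) - f wstar) + α ^ 3 * Cc + E m
    rw [hfm, hfstar]
    linarith [hA, hΦval2, hsum2, hh1, h5, h6]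
  -- conclude via aux_rec
  intro k hk
  have hmain := aux_rec δ E Cc hCc0 hE hδpos hδ1 hrec k (by omega)
  have hkr : (0:ℝ) ≤ (k:ℝ) := Nat.cast_nonneg k
  set S := ∑ i ∈ Finset.Icc 1 k, ((i:ℝ) + 3) ^ 3 * E i with hSdef
  have hS0 : 0 ≤ S := Finset.sum_nonneg fun i _ => mul_nonneg (by positivity) (hE i)
  have hp3 : (0:ℝ) < ((k:ℝ) + 3) ^ 3 := by positivity
  have h1 : δ (k + 1) ≤ (27 * Cc * ((k:ℝ) + 1) + S) / ((k:ℝ) + 3) ^ 3 := by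
    rw [le_div_iff₀ hp3, mul_comm]
    exact hmain
  have h2 : (27 * Cc * ((k:ℝ) + 1) + S) / ((k:ℝ) + 3) ^ 3
      ≤ 30 * Cc / ((k:ℝ) + 2) ^ 2 + 1 / ((k:ℝ) + 1) ^ 3 * S := by
    rw [add_div]
    have hb1 : 27 * Cc * ((k:ℝ) + 1) / ((k:ℝ) + 3) ^ 3 ≤ 30 * Cc / ((k:ℝ) + 2) ^ 2 := by
      rw [div_le_div_iff₀ hp3 (by positivity)]
      nlinarith [mul_le_mul_of_nonneg_left
        (show 27 * (((k:ℝ) + 1) * ((k:ℝ) + 2) ^ 2) ≤ 30 * ((k:ℝ) + 3) ^ 3 by nlinarith) hCc0]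
    have hb2 : S / ((k:ℝ) + 3) ^ 3 ≤ 1 / ((k:ℝ) + 1) ^ 3 * S := by
      rw [one_div_mul_eq_div]
      exact div_le_div_of_nonneg_left hS0 (by positivity) (by nlinarith)
    linarith
  exact le_trans h1 h2
end

section
/- (O(1/k²) global rate with summably inexact subproblem solutions.) Under the hypotheses of the global sublinear convergence theorem — B ∈ ℝ^{M×N} with nonnegative entries and columns B_j, 𝒞 a nonempty compact convex subset of {w ∈ Δ_M : ⟨B_j,w⟩ > 0 ∀j}, f(w) = -(1/N)∑_j log⟨B_j,w⟩ with minimum f* over 𝒞, iterates (w^k) ⊆ 𝒞 with f(w^k) ≤ f(w⁰) and f(w^{k+1}) ≤ inf_{y∈𝒞}{Φ_f(y,w^k) + (L_k/6)‖y-w^k‖³_{H(w^k)}} + E_k, 0 ≤ L_k ≤ L̄, E_k ≥ 0 — if in addition ∑_{k=1}^∞ E_k k³ < ∞, then there exists a constant A > 0 such that f(w^k) - f* ≤ A/k² for all k ≥ 1. -/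
open Finset Set

lemma aux_hasDeriv (x : ℝ) (hx : -1 < x) :
    HasDerivAt (fun x : ℝ => x - x^2/2 + x^3/3 - Real.log (1+x))
      (1 - x + x^2 - 1/(1+x)) x := by
  have h1 : HasDerivAt (fun x : ℝ => 1 + x) 1 x := by
    simpa using (hasDerivAt_id x).const_add 1
  have hlog : HasDerivAt (fun x : ℝ => Real.log (1+x)) (1/(1+x)) x := by
    simpa using h1.log (by linarith)
  have hpoly : HasDerivAt (fun x : ℝ => x - x^2/2 + x^3/3) (1 - x + x^2) x := by
    have := ((hasDerivAt_id x).sub ((hasDerivAt_pow 2 x).div_const 2)).add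
      ((hasDerivAt_pow 3 x).div_const 3)
    refine this.congr_deriv ?_
    norm_num
  exact hpoly.sub hlog

lemma aux_hasDeriv2 (x : ℝ) (hx : -1 < x) :
    HasDerivAt (fun x : ℝ => x - x^2/2 - Real.log (1+x))
      (1 - x - 1/(1+x)) x := by
  have h1 : HasDerivAt (fun x : ℝ => 1 + x) 1 x := by
    simpa using (hasDerivAt_id x).const_add 1
  have hlog : HasDerivAt (fun x : ℝ => Real.log (1+x)) (1/(1+x)) x := by
    simpa using h1.log (by linarith)
  have hpoly : HasDerivAt (fun x : ℝ => x - x^2/2) (1 - x) x := by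
    have := (hasDerivAt_id x).sub ((hasDerivAt_pow 2 x).div_const 2)
    refine this.congr_deriv ?_
    norm_num
  exact hpoly.sub hlog

lemma log_taylor_pos {t : ℝ} (ht : 0 ≤ t) :
    Real.log (1 + t) ≤ t - t^2/2 + t^3/3 := by
  have key : MonotoneOn (fun x : ℝ => x - x^2/2 + x^3/3 - Real.log (1+x)) (Ici 0) := by
    apply monotoneOn_of_deriv_nonneg (convex_Ici 0)
    · intro x hx
      exact (aux_hasDeriv x (by simp at hx; linarith)).continuousAt.continuousWithinAt
    · intro x hx
      rw [interior_Ici] at hx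
      exact (aux_hasDeriv x (by simp at hx; linarith)).differentiableAt.differentiableWithinAt
    · intro x hx
      rw [interior_Ici] at hx
      rw [Set.mem_Ioi] at hx
      rw [(aux_hasDeriv x (by linarith)).deriv]
      have h1 : (0:ℝ) < 1 + x := by linarith
      rw [sub_nonneg, div_le_iff₀ h1]
      nlinarith
  have h0 : (fun x : ℝ => x - x^2/2 + x^3/3 - Real.log (1+x)) 0 = 0 := by norm_num
  have := key (self_mem_Ici) (mem_Ici.2 ht) ht
  rw [h0] at this
  simp only at this
  linarith

lemma log_taylor_neg {t : ℝ} (ht1 : -1 < t) (ht : t ≤ 0) :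
    Real.log (1 + t) ≤ t - t^2/2 := by
  have key : AntitoneOn (fun x : ℝ => x - x^2/2 - Real.log (1+x)) (Ioc (-1) 0) := by
    apply antitoneOn_of_deriv_nonpos (convex_Ioc (-1) 0)
    · intro x hx
      exact (aux_hasDeriv2 x hx.1).continuousAt.continuousWithinAt
    · intro x hx
      rw [interior_Ioc] at hx
      exact (aux_hasDeriv2 x hx.1).differentiableAt.differentiableWithinAt
    · intro x hx
      rw [interior_Ioc] at hx
      rw [(aux_hasDeriv2 x hx.1).deriv]
      have h1 : (0:ℝ) < 1 + x := by linarith [hx.1]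
      rw [sub_nonpos, le_div_iff₀ h1]
      nlinarith [hx.2]
  have h0 : (fun x : ℝ => x - x^2/2 - Real.log (1+x)) 0 = 0 := by norm_num
  have := key (mem_Ioc.2 ⟨ht1, ht⟩) (mem_Ioc.2 ⟨by norm_num, le_refl 0⟩) ht
  rw [h0] at this
  simp only at this
  linarith

lemma log_taylor {t : ℝ} (ht : -1 < t) :
    Real.log (1 + t) ≤ t - t^2/2 + (max 0 t)^3/3 := by
  rcases le_or_gt 0 t with h | h
  · rw [max_eq_right h]; exact log_taylor_pos h
  · rw [max_eq_left h.le]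
    simpa using log_taylor_neg ht h.le

set_option maxHeartbeats 1600000 in
/-- `O(1/k²)` global rate for the cubic-regularized Newton method with summably inexact
subproblem solutions: under the hypotheses of the global sublinear convergence theorem,
if `∑ E_k k³ < ∞`, then there is a constant `A > 0` with `f(w^k) - f* ≤ A/k²` for all `k ≥ 1`. -/
theorem stmt4 (M N : ℕ) (hM : 0 < M) (hN : 0 < N)
    (B : Fin M → Fin N → ℝ) (hB : ∀ i j, 0 ≤ B i j)
    (C : Set (Fin M → ℝ)) (hCne : C.Nonempty) (hCcomp : IsCompact C) (hCconv : Convex ℝ C)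
    (hCsub : C ⊆ {w | (∑ i, w i = 1 ∧ ∀ i, 0 ≤ w i) ∧ ∀ j : Fin N, 0 < ∑ i, B i j * w i})
    (f : (Fin M → ℝ) → ℝ)
    (hf : f = fun w => -(1 / (N : ℝ)) * ∑ j, Real.log (∑ i, B i j * w i))
    (Φ : (Fin M → ℝ) → (Fin M → ℝ) → ℝ)
    (hΦ : Φ = fun y w => f w
        - (1 / (N : ℝ)) * ∑ j, (∑ i, B i j * (y i - w i)) / (∑ i, B i j * w i)
        + (1 / (2 * (N : ℝ))) * ∑ j, ((∑ i, B i j * (y i - w i)) / (∑ i, B i j * w i)) ^ 2)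
    (nrm : (Fin M → ℝ) → (Fin M → ℝ) → ℝ)
    (hnrm : nrm = fun u w =>
        Real.sqrt ((1 / (N : ℝ)) * ∑ j, ((∑ i, B i j * u i) / (∑ i, B i j * w i)) ^ 2))
    (wstar : Fin M → ℝ) (hwstar : wstar ∈ C) (hmin : ∀ v ∈ C, f wstar ≤ f v)
    (w : ℕ → (Fin M → ℝ)) (hw : ∀ k, w k ∈ C) (hdecr : ∀ k, f (w k) ≤ f (w 0))
    (E : ℕ → ℝ) (hE : ∀ k, 0 ≤ E k)
    (L : ℕ → ℝ) (Lbar : ℝ) (hL : ∀ k, 0 ≤ L k ∧ L k ≤ Lbar)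
    (hstep : ∀ k : ℕ, 1 ≤ k →
      f (w (k + 1)) ≤
        sInf ((fun y => Φ y (w k) + (L k / 6) * (nrm (y - w k) (w k)) ^ 3) '' C) + E k)
    (hsum : Summable (fun k : ℕ => E k * (k : ℝ) ^ 3)) :
    ∃ A : ℝ, 0 < A ∧ ∀ k : ℕ, 1 ≤ k → f (w k) - f wstar ≤ A / (k : ℝ) ^ 2 := by
  have hNpos : (0:ℝ) < (N:ℝ) := by exact_mod_cast hN
  have hpos : ∀ v ∈ C, ∀ j, 0 < ∑ i, B i j * v i := fun v hv j => (hCsub hv).2 j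
  have hLbar : 0 ≤ Lbar := le_trans (hL 0).1 (hL 0).2
  -- the bound function g and its max c over C
  set s : (Fin M → ℝ) → Fin N → ℝ :=
    fun p j => (∑ i, B i j * wstar i - ∑ i, B i j * p i) / (∑ i, B i j * p i) with hs_def
  set g : (Fin M → ℝ) → ℝ := fun p =>
    (1/(3*(N:ℝ))) * (∑ j, (max 0 (s p j))^3)
      + (Lbar/6) * (Real.sqrt ((1/(N:ℝ)) * ∑ j, (s p j)^2))^3 with hg_def
  have hgnonneg : ∀ p, 0 ≤ g p := by
    intro p
    apply add_nonneg
    · apply mul_nonneg (by positivity)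
      apply Finset.sum_nonneg
      intro j _
      positivity
    · positivity
  obtain ⟨c, hc⟩ : ∃ c : ℝ, ∀ p ∈ C, g p ≤ c := by
    have hacont : ∀ j : Fin N, Continuous (fun v : Fin M → ℝ => ∑ i, B i j * v i) :=
      fun j => continuous_finset_sum _ (fun i _ => continuous_const.mul (continuous_apply i))
    have hscont : ∀ j : Fin N, ContinuousOn (fun p => s p j) C :=
      fun j => ContinuousOn.div
        ((continuous_const.sub (hacont j)).continuousOn) (hacont j).continuousOn
        (fun p hp => (hpos p hp j).ne')
    have hgcont : ContinuousOn g C := by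
      apply ContinuousOn.add
      · exact continuousOn_const.mul (continuousOn_finset_sum _
          (fun j _ => (continuousOn_const.sup (hscont j)).pow 3))
      · exact continuousOn_const.mul
          ((Real.continuous_sqrt.comp_continuousOn
            (continuousOn_const.mul (continuousOn_finset_sum _ (fun j _ => (hscont j).pow 2)))).pow 3)
    obtain ⟨p0, _, hp0⟩ := hCcomp.exists_isMaxOn hCne hgcont
    exact ⟨_, hp0⟩
  have hc0 : 0 ≤ c := le_trans (hgnonneg wstar) (hc wstar hwstar)
  -- main per-step inequality
  have main : ∀ k : ℕ, 1 ≤ k → ∀ α : ℝ, 0 ≤ α → α ≤ 1 →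
      f (w (k+1)) ≤ (1-α) * f (w k) + α * f wstar + α^3 * c + E k := by
    intro k hk α hα0 hα1
    set p := w k with hp_def
    have hp : p ∈ C := hw k
    set y := (1-α) • p + α • wstar with hy_def
    have hyC : y ∈ C := hCconv hp hwstar (by linarith) hα0 (by ring)
    have hyi : ∀ i, y i = (1-α) * p i + α * wstar i := fun i => rfl
    have hap : ∀ j, 0 < ∑ i, B i j * p i := hpos p hp
    have haw : ∀ j, 0 < ∑ i, B i j * wstar i := hpos wstar hwstar
    have hay : ∀ j, 0 < ∑ i, B i j * y i := hpos y hyC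
    have hyd : ∀ j, ∑ i, B i j * (y i - p i)
        = α * (∑ i, B i j * wstar i - ∑ i, B i j * p i) := by
      intro j
      have e : ∀ i, B i j * (y i - p i) = α * (B i j * wstar i - B i j * p i) := by
        intro i; rw [hyi]; ring
      rw [Finset.sum_congr rfl (fun i _ => e i), ← Finset.mul_sum, Finset.sum_sub_distrib]
    have hydiv : ∀ j, (∑ i, B i j * (y i - p i)) / (∑ i, B i j * p i) = α * s p j := by
      intro j; rw [hyd, hs_def, mul_div_assoc]
    have hay_lin : ∀ j, ∑ i, B i j * y i
        = (1-α) * (∑ i, B i j * p i) + α * (∑ i, B i j * wstar i) := by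
      intro j
      have e : ∀ i, B i j * y i = (1-α) * (B i j * p i) + α * (B i j * wstar i) := by
        intro i; rw [hyi]; ring
      rw [Finset.sum_congr rfl (fun i _ => e i), Finset.sum_add_distrib,
        ← Finset.mul_sum, ← Finset.mul_sum]
    have hay_eq : ∀ j, ∑ i, B i j * y i = (∑ i, B i j * p i) * (1 + α * s p j) := by
      intro j
      have hmul : s p j * (∑ i, B i j * p i)
          = ∑ i, B i j * wstar i - ∑ i, B i j * p i := by
        rw [hs_def]; exact div_mul_cancel₀ _ (hap j).ne'
      rw [hay_lin j]
      linear_combination -α * hmul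
    have h1as : ∀ j, -1 < α * s p j := by
      intro j
      have h := hay j
      rw [hay_eq j] at h
      nlinarith [hap j]
    have htay : ∀ j, Real.log (1 + α * s p j)
        ≤ α * s p j - (α * s p j)^2/2 + α^3 * (max 0 (s p j))^3/3 := by
      intro j
      have h := log_taylor (h1as j)
      have hmax : max 0 (α * s p j) = α * max 0 (s p j) := by
        have := mul_max_of_nonneg 0 (s p j) hα0
        simpa using this.symm
      calc Real.log (1 + α * s p j) ≤ α * s p j - (α * s p j)^2/2 + (max 0 (α * s p j))^3/3 := h
        _ = α * s p j - (α * s p j)^2/2 + α^3 * (max 0 (s p j))^3/3 := by rw [hmax]; ring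
    have hlogy : ∀ j, Real.log (∑ i, B i j * y i)
        = Real.log (∑ i, B i j * p i) + Real.log (1 + α * s p j) := by
      intro j
      rw [hay_eq j, Real.log_mul (hap j).ne' (by nlinarith [h1as j])]
    have hfy : f y = f p - (1/(N:ℝ)) * ∑ j, Real.log (1 + α * s p j) := by
      rw [hf]
      simp only
      rw [Finset.sum_congr rfl (fun j _ => hlogy j), Finset.sum_add_distrib]
      ring
    have hΦy : Φ y p = f p - (1/(N:ℝ)) * ∑ j, α * s p j
        + (1/(2*(N:ℝ))) * ∑ j, (α * s p j)^2 := by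
      rw [hΦ]
      simp only
      have e2 : ∑ j, ((∑ i, B i j * (y i - p i)) / (∑ i, B i j * p i))^2
          = ∑ j, (α * s p j)^2 := Finset.sum_congr rfl (fun j _ => by rw [hydiv j])
      rw [Finset.sum_congr rfl (fun j _ => hydiv j), e2]
    have key1 : Φ y p ≤ f y + α^3 * ((1/(3*(N:ℝ))) * ∑ j, (max 0 (s p j))^3) := by
      rw [hfy, hΦy]
      have hsum_tay : ∑ j, Real.log (1 + α * s p j)
          ≤ (∑ j, α * s p j) - (∑ j, (α * s p j)^2)/2 + α^3 * ((∑ j, (max 0 (s p j))^3)/3) := by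
        calc ∑ j, Real.log (1 + α * s p j)
            ≤ ∑ j, (α * s p j - (α * s p j)^2/2 + α^3 * (max 0 (s p j))^3/3) :=
              Finset.sum_le_sum (fun j _ => htay j)
          _ = _ := by
              rw [Finset.sum_add_distrib, Finset.sum_sub_distrib, ← Finset.sum_div,
                ← Finset.mul_sum, ← Finset.sum_div, ← Finset.mul_sum, mul_div_assoc]
      have hNi : (0:ℝ) < 1/(N:ℝ) := by positivity
      have h2 : (1/(N:ℝ)) * (∑ j, Real.log (1 + α * s p j))
          ≤ (1/(N:ℝ)) * (∑ j, α * s p j) - (1/(2*(N:ℝ))) * (∑ j, (α * s p j)^2)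
            + α^3 * ((1/(3*(N:ℝ))) * ∑ j, (max 0 (s p j))^3) := by
        calc (1/(N:ℝ)) * (∑ j, Real.log (1 + α * s p j))
            ≤ (1/(N:ℝ)) * ((∑ j, α * s p j) - (∑ j, (α * s p j)^2)/2
                + α^3 * ((∑ j, (max 0 (s p j))^3)/3)) :=
              mul_le_mul_of_nonneg_left hsum_tay hNi.le
          _ = _ := by ring
      linarith
    have hnrm_eq : nrm (y - p) p = α * Real.sqrt ((1/(N:ℝ)) * ∑ j, (s p j)^2) := by
      rw [hnrm]
      simp only
      have e : ∀ j, ((∑ i, B i j * (y - p) i) / (∑ i, B i j * p i))^2 = α^2 * (s p j)^2 := by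
        intro j
        have e0 : ∑ i, B i j * (y - p) i = ∑ i, B i j * (y i - p i) := rfl
        rw [e0, hyd, mul_div_assoc, mul_pow, hs_def]
      rw [Finset.sum_congr rfl (fun j _ => e j), ← Finset.mul_sum,
        show (1/(N:ℝ)) * (α^2 * ∑ j, (s p j)^2) = α^2 * ((1/(N:ℝ)) * ∑ j, (s p j)^2) by ring,
        Real.sqrt_mul (sq_nonneg α), Real.sqrt_sq hα0]
    have hcub : (L k/6) * (nrm (y - p) p)^3
        ≤ α^3 * ((Lbar/6) * (Real.sqrt ((1/(N:ℝ)) * ∑ j, (s p j)^2))^3) := by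
      rw [hnrm_eq, mul_pow]
      have ht3 : (0:ℝ) ≤ (Real.sqrt ((1/(N:ℝ)) * ∑ j, (s p j)^2))^3 := by positivity
      have hLk := hL k
      nlinarith [pow_nonneg hα0 3, mul_le_mul_of_nonneg_right hLk.2 ht3,
        mul_le_mul_of_nonneg_left (mul_le_mul_of_nonneg_right hLk.2 ht3) (pow_nonneg hα0 3)]
    have hconv : f y ≤ (1-α) * f p + α * f wstar := by
      rw [hf]
      simp only
      have hjlog : ∀ j, (1-α) * Real.log (∑ i, B i j * p i)
          + α * Real.log (∑ i, B i j * wstar i) ≤ Real.log (∑ i, B i j * y i) := by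
        intro j
        have hcc := strictConcaveOn_log_Ioi.concaveOn
        have h := hcc.2 (Set.mem_Ioi.2 (hap j)) (Set.mem_Ioi.2 (haw j))
          (by linarith : (0:ℝ) ≤ 1-α) hα0 (by ring)
        rw [smul_eq_mul, smul_eq_mul, smul_eq_mul, smul_eq_mul] at h
        rw [hay_lin j]
        exact h
      have hsum : ∑ j, ((1-α) * Real.log (∑ i, B i j * p i)
          + α * Real.log (∑ i, B i j * wstar i)) ≤ ∑ j, Real.log (∑ i, B i j * y i) :=
        Finset.sum_le_sum (fun j _ => hjlog j)
      rw [Finset.sum_add_distrib, ← Finset.mul_sum, ← Finset.mul_sum] at hsum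
      have h2 := mul_le_mul_of_nonneg_left hsum (by positivity : (0:ℝ) ≤ 1/(N:ℝ))
      nlinarith [h2]
    -- assemble
    have himg : Φ y p + (L k/6) * (nrm (y - p) p)^3
        ∈ (fun y => Φ y p + (L k / 6) * (nrm (y - p) p) ^ 3) '' C := ⟨y, hyC, rfl⟩
    have hbdd : BddBelow ((fun y => Φ y p + (L k / 6) * (nrm (y - p) p) ^ 3) '' C) := by
      refine ⟨f p - 1/2, ?_⟩
      rintro z ⟨y', hy', rfl⟩
      simp only
      have hcube : 0 ≤ (L k/6) * (nrm (y' - p) p)^3 := by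
        apply mul_nonneg (by linarith [(hL k).1])
        rw [hnrm]
        positivity
      have hΦlb : f p - 1/2 ≤ Φ y' p := by
        rw [hΦ]
        simp only
        set r : Fin N → ℝ := fun j => (∑ i, B i j * (y' i - p i)) / (∑ i, B i j * p i) with hr
        have hS : ∑ _j : Fin N, (-(1/2):ℝ) ≤ ∑ j, (-(r j) + (r j)^2/2) :=
          Finset.sum_le_sum (fun j _ => by nlinarith [sq_nonneg (r j - 1)])
        have hSl : ∑ _j : Fin N, (-(1/2):ℝ) = (N:ℝ) * (-(1/2)) := by
          rw [Finset.sum_const, card_univ, Fintype.card_fin]; simp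
        have hId : ∑ j, (-(r j) + (r j)^2/2) = -(∑ j, r j) + (∑ j, (r j)^2)/2 := by
          rw [Finset.sum_add_distrib, Finset.sum_neg_distrib, Finset.sum_div]
        have hfinal : -(1/(N:ℝ)) * (∑ j, r j) + (1/(2*(N:ℝ))) * (∑ j, (r j)^2) ≥ -(1/2) := by
          have h3 : (N:ℝ) * (-(1/2)) ≤ -(∑ j, r j) + (∑ j, (r j)^2)/2 := by
            rw [← hSl, ← hId]; exact hS
          have h4 := mul_le_mul_of_nonneg_left h3 (by positivity : (0:ℝ) ≤ 1/(N:ℝ))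
          have h5 : (1/(N:ℝ)) * ((N:ℝ) * (-(1/2))) = -(1/2) := by field_simp
          calc -(1/(N:ℝ)) * (∑ j, r j) + (1/(2*(N:ℝ))) * (∑ j, (r j)^2)
              = (1/(N:ℝ)) * (-(∑ j, r j) + (∑ j, (r j)^2)/2) := by ring
            _ ≥ (1/(N:ℝ)) * ((N:ℝ) * (-(1/2))) := h4
            _ = -(1/2) := h5
        linarith
      linarith
    have hsInf := csInf_le hbdd himg
    have hstep' := hstep k hk
    rw [← hp_def] at hstep'
    have hgsplit : α^3 * g p = α^3 * ((1/(3*(N:ℝ))) * ∑ j, (max 0 (s p j))^3)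
        + α^3 * ((Lbar/6) * (Real.sqrt ((1/(N:ℝ)) * ∑ j, (s p j)^2))^3) := by
      rw [hg_def]; ring
    have hgc := mul_le_mul_of_nonneg_left (hc p hp) (pow_nonneg hα0 3)
    have t1 : f (w (k+1)) ≤ Φ y p + (L k/6) * (nrm (y - p) p)^3 + E k := by
      linarith only [hstep', hsInf]
    have t2 : Φ y p + (L k/6) * (nrm (y - p) p)^3 ≤ f y + α^3 * g p := by
      linarith only [key1, hcub, hgsplit]
    have t3 : f y + α^3 * g p ≤ (1-α) * f p + α * f wstar + α^3 * c := by
      linarith only [hconv, hgc]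
    exact le_trans t1 (le_trans (add_le_add_left t2 (E k)) (add_le_add_left t3 (E k)))
  have hδ0 : ∀ k, 0 ≤ f (w k) - f wstar := fun k => sub_nonneg.2 (hmin _ (hw k))
  have hδle : ∀ k, f (w k) - f wstar ≤ f (w 0) - f wstar := fun k => by linarith [hdecr k]
  have hrec : ∀ k : ℕ, 1 ≤ k → ∀ α : ℝ, 0 ≤ α → α ≤ 1 →
      f (w (k+1)) - f wstar ≤ (1-α) * (f (w k) - f wstar) + α^3 * c + E k := by
    intro k hk α h0 h1
    have h := main k hk α h0 h1
    have e : (1-α) * f (w k) + α * f wstar - f wstar = (1-α) * (f (w k) - f wstar) := by ring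
    linarith [h, e.le, e.ge]
  set S := ∑' k : ℕ, E k * (k:ℝ)^3 with hS_def
  have hSnn : 0 ≤ S := tsum_nonneg (fun k => mul_nonneg (hE k) (by positivity))
  have hterm : ∀ k : ℕ, E k * (k:ℝ)^3 ≤ S := fun k => hsum.le_tsum k (fun j _ => mul_nonneg (hE j) (by positivity))
  set d0 : ℝ := f (w 0) - f wstar with hd0_def
  have hd0nn : 0 ≤ d0 := hδ0 0
  refine ⟨9 * d0 + 108 * c + 8 * S + 1, by linarith, ?_⟩
  set A := 9 * d0 + 108 * c + 8 * S + 1 with hA_def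
  have hAnn : 0 < A := by linarith
  intro k hk
  induction k, hk using Nat.le_induction with
  | base =>
    have h1 := hδle 1
    norm_num
    linarith
  | succ k hk1 ih =>
    rcases le_or_gt 3 k with h3 | h3
    · set K := (k:ℝ) with hK_def
      have hK3 : (3:ℝ) ≤ K := by rw [hK_def]; exact_mod_cast h3
      have hK0 : (0:ℝ) < K := by linarith
      have hα0 : (0:ℝ) ≤ 3/K := by positivity
      have hα1 : 3/K ≤ 1 := by rw [div_le_one hK0]; linarith
      have h1 := hrec k hk1 (3/K) hα0 hα1
      have h2 : (1 - 3/K) * (f (w k) - f wstar) ≤ (1-3/K) * (A/K^2) :=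
        mul_le_mul_of_nonneg_left ih (by linarith [hα1])
      have hEk : E k * K^3 ≤ S := hterm k
      have hgoal : (1-3/K)*(A/K^2) + (3/K)^3 * c + E k ≤ A/(K+1)^2 := by
        have expand : (1-3/K)*(A/K^2) + (3/K)^3*c + E k
            = ((K-3)*A*(K+1)^2 + 27*c*(K+1)^2 + (E k)*K^3*(K+1)^2) / (K^3*(K+1)^2) := by
          field_simp
          ring
        have expandR : A/(K+1)^2 = (A*K^3)/(K^3*(K+1)^2) := by
          rw [div_eq_div_iff (by positivity) (by positivity)]; ring
        rw [expand, expandR]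
        apply div_le_div_of_nonneg_right ?_ (by positivity)
        have f1 : E k * K^3 * (K+1)^2 ≤ S * (K+1)^2 :=
          mul_le_mul_of_nonneg_right hEk (by positivity)
        have f2 : (27*c + S) * (K+1)^2 ≤ A * (K+1)^2 :=
          mul_le_mul_of_nonneg_right (by rw [hA_def]; linarith) (by positivity)
        have f3 : A * (K+1)^2 ≤ A * (K^2 + 5*K + 3) :=
          mul_le_mul_of_nonneg_left (by nlinarith) hAnn.le
        nlinarith [f1, f2, f3]
      have hcast : ((k:ℕ)+1 : ℝ) = K + 1 := by push_cast; ring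
      calc f (w (k+1)) - f wstar ≤ (1-3/K) * (f (w k) - f wstar) + (3/K)^3 * c + E k := h1
        _ ≤ (1-3/K)*(A/K^2) + (3/K)^3 * c + E k := by linarith
        _ ≤ A/(K+1)^2 := hgoal
        _ = A/((k+1 : ℕ) : ℝ)^2 := by push_cast; ring
    · have hk2 : (k:ℝ) ≤ 2 := by exact_mod_cast Nat.lt_succ_iff.mp h3
      have h1 := hδle (k+1)
      have hx0 : (0:ℝ) < ((k:ℝ)+1)^2 := by positivity
      have hx9 : ((k:ℝ)+1)^2 ≤ 9 := by nlinarith [Nat.cast_nonneg (α := ℝ) k]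
      have h2 : d0 ≤ A/9 := by rw [le_div_iff₀ (by norm_num : (0:ℝ) < 9)]; linarith
      have h3' : A/9 ≤ A/((k:ℝ)+1)^2 := by
        apply div_le_div_of_nonneg_left hAnn.le hx0 hx9
      calc f (w (k+1)) - f wstar ≤ d0 := h1
        _ ≤ A/9 := h2
        _ ≤ A/((k:ℝ)+1)^2 := h3'
        _ = A/((k+1 : ℕ) : ℝ)^2 := by push_cast; ring
end

section
/- Let A ∈ ℝ^{n×n} be a symmetric matrix and B ∈ ℝ^{n×n} a positive definite matrix. If -B ⪯ A ⪯ B (i.e., both B - A and B + A are positive semidefinite), then A B⁻¹ A ⪯ B, i.e., B - A B⁻¹ A is positive semidefinite. -/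
open Matrix


/-- If `A` is symmetric, `B` is positive definite, and `-B ⪯ A ⪯ B`
(i.e. `B - A` and `B + A` are positive semidefinite), then `A B⁻¹ A ⪯ B`. -/
theorem stmt6 (n : ℕ) (A B : Matrix (Fin n) (Fin n) ℝ)
    (hA : A.IsSymm) (hB : B.PosDef)
    (h1 : (B - A).PosSemidef) (h2 : (B + A).PosSemidef) :
    (B - A * B⁻¹ * A).PosSemidef := by
  haveI : Invertible B := hB.isUnit.invertible
  have hAH : Aᴴ = A := by
    ext i j
    simpa [Matrix.conjTranspose_apply] using (congrFun (congrFun hA j) i).symm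
  have hcomm : ∀ u v : Fin n → ℝ, u ⬝ᵥ A *ᵥ v = v ⬝ᵥ A *ᵥ u := by
    intro u v
    rw [Matrix.dotProduct_mulVec, ← Matrix.mulVec_transpose, hA, dotProduct_comm]
  have hblock : (Matrix.fromBlocks B A Aᴴ B).PosSemidef := by
    rw [hAH]
    refine Matrix.posSemidef_iff_dotProduct_mulVec.mpr ⟨?_, ?_⟩
    · rw [Matrix.IsHermitian, Matrix.fromBlocks_conjTranspose, hAH, hB.1.eq]
    · intro x
      set u : Fin n → ℝ := x ∘ Sum.inl with hu
      set v : Fin n → ℝ := x ∘ Sum.inr with hv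
      have e1 := h2.dotProduct_mulVec_nonneg (u + v)
      have e2 := h1.dotProduct_mulVec_nonneg (u - v)
      simp only [star_trivial, Matrix.add_mulVec, Matrix.sub_mulVec, Matrix.mulVec_add,
        Matrix.mulVec_sub, dotProduct_add, dotProduct_sub,
        add_dotProduct, sub_dotProduct] at e1 e2
      rw [Matrix.fromBlocks_mulVec, Matrix.dotProduct_block]
      simp only [star_trivial, Sum.elim_comp_inl, Sum.elim_comp_inr,
        dotProduct_add]
      rw [← hu, ← hv]
      have h3 := hcomm u v
      linarith [e1, e2, h3]
  have := (Matrix.PosDef.fromBlocks₁₁ A B hB).mp hblock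
  rwa [hAH] at this
end

section
/- Let M ≥ 1 and let U ∈ ℝ^{M×M} be the lower-triangular matrix with U_{ij} = 1/(M - j + 1) for 1 ≤ j ≤ i ≤ M and U_{ij} = 0 for i < j. Then the set of nondecreasing probability vectors 𝒞⁺ = {w ∈ ℝ^M : ∑_{i=1}^M w_i = 1, w ≥ 0, w_1 ≤ w_2 ≤ … ≤ w_M} equals the linear image of the unit simplex under U: 𝒞⁺ = {U y : y ∈ Δ_M}. -/
open Finset

/-- The set of nondecreasing probability vectors is the image of the unit simplex under the
lower-triangular matrix `U` with `U_{ij} = 1/(M-j+1)` for `j ≤ i` (1-based), `0` otherwise. -/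
theorem stmt8 (M : ℕ) (hM : 1 ≤ M)
    (U : Matrix (Fin M) (Fin M) ℝ)
    (hU : ∀ i j : Fin M, U i j = if j ≤ i then 1 / ((M - (j : ℕ) : ℕ) : ℝ) else 0) :
    {w : Fin M → ℝ | ∑ i, w i = 1 ∧ (∀ i, 0 ≤ w i) ∧
        ∀ i j : Fin M, i ≤ j → w i ≤ w j}
      = (fun y => U.mulVec y) '' {y : Fin M → ℝ | ∑ i, y i = 1 ∧ ∀ i, 0 ≤ y i} := by
  have hMj : ∀ j : Fin M, (0 : ℝ) < ((M - (j : ℕ) : ℕ) : ℝ) := by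
    intro j
    have : 0 < M - (j : ℕ) := by omega
    exact_mod_cast this
  -- formula for mulVec
  have hmul : ∀ y : Fin M → ℝ, ∀ i : Fin M,
      U.mulVec y i = ∑ j ∈ univ.filter (fun j => j ≤ i),
        y j / ((M - (j : ℕ) : ℕ) : ℝ) := by
    intro y i
    rw [Matrix.mulVec, dotProduct]
    rw [Finset.sum_filter]
    apply Finset.sum_congr rfl
    intro j _
    rw [hU i j]
    by_cases h : j ≤ i <;> simp [h, div_eq_mul_inv, mul_comm]
  -- counting lemma
  have hcard : ∀ j : Fin M, (univ.filter (fun i => j ≤ i)).card = M - (j : ℕ) := by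
    intro j
    have : univ.filter (fun i => j ≤ i) = Finset.Ici j := by ext; simp
    rw [this, Fin.card_Ici]
  -- sum swap lemma : total sum of partial averages
  have hswap : ∀ c : Fin M → ℝ,
      (∑ i : Fin M, ∑ j ∈ univ.filter (fun j => j ≤ i), c j)
        = ∑ j : Fin M, ((M - (j : ℕ) : ℕ) : ℝ) * c j := by
    intro c
    have : ∀ i : Fin M, (∑ j ∈ univ.filter (fun j => j ≤ i), c j)
        = ∑ j : Fin M, if j ≤ i then c j else 0 := by
      intro i; rw [Finset.sum_filter]
    simp_rw [this]
    rw [Finset.sum_comm]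
    apply Finset.sum_congr rfl
    intro j _
    rw [← Finset.sum_filter, Finset.sum_const, hcard j, nsmul_eq_mul]
  ext w
  constructor
  · rintro ⟨hsum, hpos, hmono⟩
    -- extended vector G
    set G : ℕ → ℝ := fun n => if h : 0 < n ∧ n ≤ M then w ⟨n - 1, by omega⟩ else 0 with hG
    have hG0 : G 0 = 0 := by simp [hG]
    have hGsucc : ∀ j : Fin M, G ((j : ℕ) + 1) = w j := by
      intro j
      have hj := j.isLt
      simp only [hG]
      rw [dif_pos (by omega)]
      exact congrArg w (Fin.ext rfl)
    set y : Fin M → ℝ :=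
      fun j => ((M - (j : ℕ) : ℕ) : ℝ) * (G ((j : ℕ) + 1) - G (j : ℕ)) with hy
    -- telescoping
    have htel : ∀ i : Fin M,
        (∑ j ∈ univ.filter (fun j => j ≤ i), (G ((j : ℕ) + 1) - G (j : ℕ))) = w i := by
      intro i
      have h1 : (∑ j ∈ univ.filter (fun j => j ≤ i), (G ((j : ℕ) + 1) - G (j : ℕ)))
          = ∑ j : Fin M, if (j : ℕ) ≤ (i : ℕ) then (G ((j : ℕ) + 1) - G (j : ℕ)) else 0 := by
        rw [Finset.sum_filter]
        apply Finset.sum_congr rfl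
        intro j _
        simp only [Fin.le_def]
      rw [h1, Fin.sum_univ_eq_sum_range (fun n => if n ≤ (i : ℕ) then (G (n + 1) - G n) else 0) M]
      have h2 : (Finset.range M).filter (fun n => n ≤ (i : ℕ)) = Finset.range ((i : ℕ) + 1) := by
        ext n
        have := i.isLt
        simp only [Finset.mem_filter, Finset.mem_range]
        omega
      rw [← Finset.sum_filter, h2, Finset.sum_range_sub G ((i : ℕ) + 1), hG0, hGsucc i, sub_zero]
    have hynn : ∀ j : Fin M, 0 ≤ y j := by
      intro j
      apply mul_nonneg (le_of_lt (hMj j))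
      rcases Nat.eq_zero_or_pos (j : ℕ) with h | h
      · rw [h, hG0]
        have := hGsucc j
        rw [h] at this
        rw [this, sub_zero]
        exact hpos j
      · have hj := j.isLt
        have : G (j : ℕ) = w ⟨(j : ℕ) - 1, by omega⟩ := by
          simp only [hG]; rw [dif_pos (by omega)]
        rw [this, hGsucc j, sub_nonneg]
        refine hmono _ _ ?_
        rw [Fin.le_def]
        show (j : ℕ) - 1 ≤ (j : ℕ)
        omega
    have hwy : U.mulVec y = w := by
      funext i
      rw [hmul y i, ← htel i]
      apply Finset.sum_congr rfl
      intro j _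
      show ((M - (j : ℕ) : ℕ) : ℝ) * (G ((j : ℕ) + 1) - G (j : ℕ)) / ((M - (j : ℕ) : ℕ) : ℝ) = _
      exact mul_div_cancel_left₀ _ (ne_of_gt (hMj j))
    refine ⟨y, ⟨?_, hynn⟩, hwy⟩
    have : ∑ j : Fin M, y j
        = ∑ i : Fin M, ∑ j ∈ univ.filter (fun j => j ≤ i), (G ((j : ℕ) + 1) - G (j : ℕ)) := by
      rw [hswap]
    rw [this]
    simp_rw [htel]
    exact hsum
  · rintro ⟨y, ⟨hsum, hpos⟩, rfl⟩
    have hterm : ∀ j : Fin M, 0 ≤ y j / ((M - (j : ℕ) : ℕ) : ℝ) := by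
      intro j; exact div_nonneg (hpos j) (le_of_lt (hMj j))
    refine ⟨?_, ?_, ?_⟩
    · simp_rw [hmul y]
      rw [hswap (fun j => y j / ((M - (j : ℕ) : ℕ) : ℝ))]
      rw [← hsum]
      apply Finset.sum_congr rfl
      intro j _
      rw [mul_comm]
      exact div_mul_cancel₀ _ (ne_of_gt (hMj j))
    · intro i
      show 0 ≤ U.mulVec y i
      rw [hmul y i]
      exact Finset.sum_nonneg fun j _ => hterm j
    · intro i i' hii'
      show U.mulVec y i ≤ U.mulVec y i'
      rw [hmul y i, hmul y i']
      apply Finset.sum_le_sum_of_subset_of_nonneg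
      · intro j hj
        simp only [Finset.mem_filter, Finset.mem_univ, true_and] at *
        exact le_trans hj hii'
      · intro j _ _; exact hterm j
end

section
/- Let M ≥ 3 and let 𝒞^∧ = {w ∈ ℝ^M : ∑_{i=1}^M w_i = 1, w ≥ 0, 2w_i ≥ w_{i-1} + w_{i+1} for all 2 ≤ i ≤ M-1} be the set of concave probability vectors. Then the set of extreme points of 𝒞^∧ is exactly {v_1, …, v_M}, where v_1 = (2/(M(M-1)))·(0, 1, 2, …, M-1)ᵀ, v_M = (2/(M(M-1)))·(M-1, M-2, …, 1, 0)ᵀ, and for 2 ≤ j ≤ M-1 the vector v_j has coordinates v_j(1) = 0, v_j(i) = (i-1) p_j for 2 ≤ i ≤ j, and v_j(i) = (M-i) q_j for j < i ≤ M, with p_j = 2/((M-1)(j-1)) and q_j = 2/((M-1)(M-j)). -/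
open Finset

noncomputable def Vg (M j i : ℕ) : ℝ :=
  if j = 0 then (2 / ((M : ℝ) * ((M : ℝ) - 1))) * (i : ℝ)
  else if j = M - 1 then (2 / ((M : ℝ) * ((M : ℝ) - 1))) * ((M : ℝ) - 1 - (i : ℝ))
  else if i ≤ j then (i : ℝ) * (2 / (((M : ℝ) - 1) * (j : ℝ)))
  else ((M : ℝ) - 1 - (i : ℝ)) * (2 / (((M : ℝ) - 1) * ((M : ℝ) - 1 - (j : ℝ))))

noncomputable def cg (M : ℕ) (f : ℕ → ℝ) (j : ℕ) : ℝ :=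
  if j = 0 then ((M : ℝ) / 2) * f (M - 1)
  else if j = M - 1 then ((M : ℝ) / 2) * f 0
  else (2 * f j - f (j - 1) - f (j + 1)) * ((j : ℝ) * ((M : ℝ) - 1 - (j : ℝ))) / 2

noncomputable def FV (M : ℕ) (w : Fin M → ℝ) (i : ℕ) : ℝ :=
  if h : i < M then w ⟨i, h⟩ else 0


lemma Vg_endpoint0 (M : ℕ) (hM : 3 ≤ M) (j : ℕ) (hj : j < M) :
    Vg M j 0 = if j = M - 1 then 2 / (M : ℝ) else 0 := by
  have hM3 : (3:ℝ) ≤ (M:ℝ) := by exact_mod_cast hM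
  have hMne : (M:ℝ) ≠ 0 := by linarith
  have hM1ne : (M:ℝ) - 1 ≠ 0 := by linarith
  unfold Vg
  rcases eq_or_ne j 0 with h0 | h0
  · simp [h0, show (0:ℕ) ≠ M - 1 by omega]
  rcases eq_or_ne j (M-1) with h1 | h1
  · have hc : ((M-1:ℕ):ℝ) = (M:ℝ) - 1 := by push_cast [Nat.cast_sub (by omega : 1 ≤ M)]; ring
    rw [if_neg h0, if_pos h1, if_pos h1]
    field_simp
    ring
  · simp [h0, h1, Nat.zero_le]

lemma Vg_endpoint1 (M : ℕ) (hM : 3 ≤ M) (j : ℕ) (hj : j < M) :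
    Vg M j (M - 1) = if j = 0 then 2 / (M : ℝ) else 0 := by
  have hM3 : (3:ℝ) ≤ (M:ℝ) := by exact_mod_cast hM
  have hMne : (M:ℝ) ≠ 0 := by linarith
  have hM1ne : (M:ℝ) - 1 ≠ 0 := by linarith
  have hcast : ((M-1:ℕ):ℝ) = (M:ℝ) - 1 := by push_cast [Nat.cast_sub (by omega : 1 ≤ M)]; ring
  unfold Vg
  rcases eq_or_ne j 0 with h0 | h0
  · rw [if_pos h0, if_pos h0, hcast]
    field_simp
  rcases eq_or_ne j (M-1) with h1 | h1
  · rw [if_neg h0, if_pos h1, if_neg h0, hcast]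
    ring
  · have hle : ¬ (M - 1 ≤ j) := by omega
    rw [if_neg h0, if_neg h1, if_neg hle, if_neg h0, hcast]
    ring

lemma Vg_secdiff (M : ℕ) (hM : 3 ≤ M) (j : ℕ) (hj : j < M) (k : ℕ)
    (hk0 : 0 < k) (hk1 : k < M - 1) :
    2 * Vg M j k - Vg M j (k - 1) - Vg M j (k + 1)
      = if k = j then 2 / ((j : ℝ) * ((M : ℝ) - 1 - (j : ℝ))) else 0 := by
  have hM3 : (3:ℝ) ≤ (M:ℝ) := by exact_mod_cast hM
  have hM1 : (M:ℝ) - 1 ≠ 0 := by linarith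
  have hck : ((k-1:ℕ):ℝ) = (k:ℝ) - 1 := by push_cast [Nat.cast_sub hk0]; ring
  unfold Vg
  rcases eq_or_ne j 0 with h0 | h0
  · simp only [h0, if_pos rfl, if_neg (by omega : k ≠ 0), hck]
    push_cast
    ring
  rcases eq_or_ne j (M-1) with h1 | h1
  · simp only [if_neg h0, if_pos h1, if_neg (by omega : k ≠ j), hck]
    push_cast
    ring
  have hj2 : j + 2 ≤ M := by omega
  have hjM : (j:ℝ) + 2 ≤ (M:ℝ) := by exact_mod_cast hj2
  have hMj : (M:ℝ) - 1 - (j:ℝ) ≠ 0 := by linarith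
  rcases lt_trichotomy k j with hkj | hkj | hkj
  · simp only [if_neg h0, if_neg h1, if_pos (le_of_lt hkj),
      if_pos (by omega : k - 1 ≤ j), if_pos (by omega : k + 1 ≤ j),
      if_neg (by omega : k ≠ j), hck]
    push_cast
    ring
  · have hjne : (j:ℝ) ≠ 0 := Nat.cast_ne_zero.mpr (by omega)
    subst hkj
    simp only [if_neg h0, if_neg h1, if_pos (le_refl k),
      if_pos (by omega : k - 1 ≤ k), if_neg (by omega : ¬ (k + 1 ≤ k)),
      if_pos rfl, hck]
    push_cast
    field_simp
    ring
  · rcases eq_or_ne k (j+1) with hk2 | hk2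
    · have hjne : (j:ℝ) ≠ 0 := Nat.cast_ne_zero.mpr (by omega)
      subst hk2
      simp only [Nat.add_sub_cancel, if_neg h0, if_neg h1,
        if_neg (by omega : ¬ (j + 1 ≤ j)), if_pos (le_refl j),
        if_neg (by omega : ¬ (j + 1 + 1 ≤ j)), if_neg (by omega : j + 1 ≠ j)]
      push_cast
      field_simp
      ring
    · simp only [if_neg h0, if_neg h1, if_neg (by omega : ¬ (k ≤ j)),
        if_neg (by omega : ¬ (k - 1 ≤ j)), if_neg (by omega : ¬ (k + 1 ≤ j)),
        if_neg (by omega : k ≠ j), hck]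
      push_cast
      ring

lemma sum_range_cast (n : ℕ) : ∑ i ∈ range n, (i:ℝ) = n * ((n:ℝ) - 1) / 2 := by
  induction n with
  | zero => simp
  | succ m ih => rw [Finset.sum_range_succ, ih]; push_cast; ring

lemma Vg_nonneg (M : ℕ) (hM : 3 ≤ M) (j : ℕ) (hj : j < M) (i : ℕ) (hi : i < M) :
    0 ≤ Vg M j i := by
  have hM3 : (3:ℝ) ≤ (M:ℝ) := by exact_mod_cast hM
  have hiM : (i:ℝ) ≤ (M:ℝ) - 1 := by
    have : (i:ℝ) + 1 ≤ (M:ℝ) := by exact_mod_cast hi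
    linarith
  have hjM : (j:ℝ) ≤ (M:ℝ) - 1 := by
    have : (j:ℝ) + 1 ≤ (M:ℝ) := by exact_mod_cast hj
    linarith
  have hi0 : (0:ℝ) ≤ (i:ℝ) := Nat.cast_nonneg i
  have hj0 : (0:ℝ) ≤ (j:ℝ) := Nat.cast_nonneg j
  unfold Vg
  split_ifs with h1 h2 h3
  · exact mul_nonneg (div_nonneg (by norm_num) (by nlinarith)) hi0
  · exact mul_nonneg (div_nonneg (by norm_num) (by nlinarith)) (by linarith)
  · exact mul_nonneg hi0 (div_nonneg (by norm_num) (by nlinarith))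
  · exact mul_nonneg (by linarith) (div_nonneg (by norm_num) (by nlinarith))

lemma Vg_sum (M : ℕ) (hM : 3 ≤ M) (j : ℕ) (hj : j < M) :
    ∑ i ∈ range M, Vg M j i = 1 := by
  have hM3 : (3:ℝ) ≤ (M:ℝ) := by exact_mod_cast hM
  have hMne : (M:ℝ) ≠ 0 := by linarith
  have hM1ne : (M:ℝ) - 1 ≠ 0 := by linarith
  rcases eq_or_ne j 0 with h0 | h0
  · simp only [Vg, h0, if_pos rfl, eq_self_iff_true, if_true]
    rw [← Finset.mul_sum, sum_range_cast]
    field_simp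
  rcases eq_or_ne j (M-1) with h1 | h1
  · simp only [Vg, if_neg h0, h1, if_pos rfl, eq_self_iff_true, if_true, if_neg (by omega : ¬ (M - 1 = 0))]
    rw [← Finset.mul_sum, Finset.sum_sub_distrib, Finset.sum_const, Finset.card_range,
      sum_range_cast]
    field_simp
    ring
  · have hj0 : 0 < j := by omega
    have hj1 : j + 1 ≤ M := by omega
    have hjM : (j:ℝ) + 2 ≤ (M:ℝ) := by exact_mod_cast (by omega : j + 2 ≤ M)
    have hjne : (j:ℝ) ≠ 0 := Nat.cast_ne_zero.mpr (by omega)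
    have hMjne : (M:ℝ) - 1 - (j:ℝ) ≠ 0 := by linarith
    rw [Finset.range_eq_Ico, ← Finset.sum_Ico_consecutive _ (Nat.zero_le (j+1)) hj1]
    have e1 : ∑ i ∈ Finset.Ico 0 (j+1), Vg M j i
        = ∑ i ∈ Finset.Ico 0 (j+1), (i:ℝ) * (2 / (((M : ℝ) - 1) * (j : ℝ))) := by
      refine Finset.sum_congr rfl fun i hi => ?_
      rw [Finset.mem_Ico] at hi
      simp only [Vg, if_neg h0, if_neg h1, if_pos (by omega : i ≤ j)]
    have e2 : ∑ i ∈ Finset.Ico (j+1) M, Vg M j i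
        = ∑ i ∈ Finset.Ico (j+1) M,
            ((M : ℝ) - 1 - (i:ℝ)) * (2 / (((M : ℝ) - 1) * ((M : ℝ) - 1 - (j : ℝ)))) := by
      refine Finset.sum_congr rfl fun i hi => ?_
      rw [Finset.mem_Ico] at hi
      simp only [Vg, if_neg h0, if_neg h1, if_neg (by omega : ¬ (i ≤ j))]
    rw [e1, e2, ← Finset.sum_mul, ← Finset.sum_mul]
    rw [← Finset.range_eq_Ico, sum_range_cast]
    rw [Finset.sum_sub_distrib, Finset.sum_const, Nat.card_Ico,
      Finset.sum_Ico_eq_sub _ (Nat.le_of_lt_succ (by omega)), sum_range_cast, sum_range_cast]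
    have hc1 : ((j+1:ℕ):ℝ) = (j:ℝ) + 1 := by push_cast; ring
    have hc2 : ((M - (j+1):ℕ):ℝ) = (M:ℝ) - ((j:ℝ) + 1) := by
      push_cast [Nat.cast_sub hj1]; ring
    rw [hc1, nsmul_eq_mul, hc2]
    field_simp
    ring

lemma lin_uniq (M : ℕ) (hM : 3 ≤ M) (f : ℕ → ℝ) (h0 : f 0 = 0) (h1 : f (M-1) = 0)
    (hd : ∀ k, 0 < k → k < M - 1 → f (k-1) + f (k+1) = 2 * f k) :
    ∀ i < M, f i = 0 := by
  have key : ∀ i, i < M → f i = i * f 1 := by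
    intro i
    induction i using Nat.strong_induction_on with
    | _ i ih =>
      intro hi
      match i with
      | 0 => simpa using h0
      | 1 => simp
      | (k+2) =>
        have e := hd (k+1) (by omega) (by omega)
        simp only [Nat.add_sub_cancel] at e
        have hk := ih k (by omega) (by omega)
        have hk1 := ih (k+1) (by omega) (by omega)
        push_cast at hk hk1 ⊢
        nlinarith [e, hk, hk1]
  have hf1 : f 1 = 0 := by
    have hkey := key (M-1) (by omega)
    rw [h1] at hkey
    have hc : ((M-1:ℕ):ℝ) ≠ 0 := Nat.cast_ne_zero.mpr (by omega)
    exact ((mul_eq_zero.mp hkey.symm).resolve_left hc)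
  intro i hi
  rw [key i hi, hf1, mul_zero]

lemma cg_linear (M : ℕ) (f g : ℕ → ℝ) (a b : ℝ) (k : ℕ) :
    cg M (fun i => a * f i + b * g i) k = a * cg M f k + b * cg M g k := by
  unfold cg; split_ifs <;> ring

lemma rep (M : ℕ) (hM : 3 ≤ M) (f : ℕ → ℝ) :
    ∀ i < M, f i = ∑ j ∈ range M, cg M f j * Vg M j i := by
  have hM3 : (3:ℝ) ≤ (M:ℝ) := by exact_mod_cast hM
  have hMne : (M:ℝ) ≠ 0 := by linarith
  set g : ℕ → ℝ := fun i => ∑ j ∈ range M, cg M f j * Vg M j i with hg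
  have hg0 : g 0 = f 0 := by
    have e : ∀ j ∈ range M, cg M f j * Vg M j 0
        = if j = M - 1 then cg M f j * (2 / (M:ℝ)) else 0 := by
      intro j hj
      rw [Vg_endpoint0 M hM j (mem_range.mp hj), mul_ite, mul_zero]
    show ∑ j ∈ range M, cg M f j * Vg M j 0 = f 0
    rw [Finset.sum_congr rfl e, Finset.sum_ite_eq' (range M) (M-1)]
    rw [if_pos (mem_range.mpr (by omega))]
    rw [show cg M f (M-1) = ((M:ℝ)/2) * f 0 by
      unfold cg; rw [if_neg (by omega : ¬ (M - 1 = 0)), if_pos rfl]]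
    field_simp
  have hg1 : g (M-1) = f (M-1) := by
    have e : ∀ j ∈ range M, cg M f j * Vg M j (M-1)
        = if j = 0 then cg M f j * (2 / (M:ℝ)) else 0 := by
      intro j hj
      rw [Vg_endpoint1 M hM j (mem_range.mp hj), mul_ite, mul_zero]
    show ∑ j ∈ range M, cg M f j * Vg M j (M-1) = f (M-1)
    rw [Finset.sum_congr rfl e, Finset.sum_ite_eq' (range M) 0]
    rw [if_pos (mem_range.mpr (by omega))]
    rw [show cg M f 0 = ((M:ℝ)/2) * f (M-1) by unfold cg; rw [if_pos rfl]]
    field_simp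
  have hgd : ∀ k, 0 < k → k < M - 1 →
      2 * g k - g (k-1) - g (k+1) = 2 * f k - f (k-1) - f (k+1) := by
    intro k hk0 hk1
    have hkne : (k:ℝ) ≠ 0 := Nat.cast_ne_zero.mpr (by omega)
    have hkM : (k:ℝ) + 2 ≤ (M:ℝ) := by exact_mod_cast (by omega : k + 2 ≤ M)
    have hMk : (M:ℝ) - 1 - (k:ℝ) ≠ 0 := by linarith
    have e : 2 * g k - g (k-1) - g (k+1)
        = ∑ j ∈ range M, cg M f j *
            (2 * Vg M j k - Vg M j (k-1) - Vg M j (k+1)) := by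
      simp only [hg, Finset.mul_sum, ← Finset.sum_sub_distrib]
      exact Finset.sum_congr rfl fun j hj => by ring
    rw [e]
    have e2 : ∀ j ∈ range M, cg M f j *
          (2 * Vg M j k - Vg M j (k-1) - Vg M j (k+1))
        = if k = j then cg M f j * (2 / ((j : ℝ) * ((M : ℝ) - 1 - (j : ℝ)))) else 0 := by
      intro j hj
      rw [Vg_secdiff M hM j (mem_range.mp hj) k hk0 hk1, mul_ite, mul_zero]
    rw [Finset.sum_congr rfl e2, Finset.sum_ite_eq (range M) k]
    rw [if_pos (mem_range.mpr (by omega))]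
    rw [show cg M f k = (2 * f k - f (k - 1) - f (k + 1)) * ((k : ℝ) * ((M : ℝ) - 1 - (k : ℝ))) / 2 by
      unfold cg; rw [if_neg (by omega : ¬ (k = 0)), if_neg (by omega : ¬ (k = M - 1))]]
    field_simp
  have huniq := lin_uniq M hM (fun i => f i - g i) (by simp [hg0]) (by simp [hg1])
    (fun k hk0 hk1 => by have := hgd k hk0 hk1; linarith)
  intro i hi
  have h2 := huniq i hi
  simp only [hg] at h2
  linarith

lemma cg_nonneg (M : ℕ) (hM : 3 ≤ M) (f : ℕ → ℝ)
    (hnn : ∀ i < M, 0 ≤ f i)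
    (hconc : ∀ k, 0 < k → k < M - 1 → f (k-1) + f (k+1) ≤ 2 * f k) :
    ∀ j < M, 0 ≤ cg M f j := by
  intro j hj
  have hM3 : (3:ℝ) ≤ (M:ℝ) := by exact_mod_cast hM
  unfold cg
  split_ifs with h0 h1
  · exact mul_nonneg (by linarith) (hnn _ (by omega))
  · exact mul_nonneg (by linarith) (hnn _ (by omega))
  · have hd := hconc j (by omega) (by omega)
    have hjM : (j:ℝ) + 1 ≤ (M:ℝ) := by exact_mod_cast hj
    have : (0:ℝ) ≤ (j:ℝ) * ((M:ℝ) - 1 - (j:ℝ)) := by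
      have hj1 : (j:ℝ) + 2 ≤ (M:ℝ) := by exact_mod_cast (by omega : j + 2 ≤ M)
      have : (0:ℝ) ≤ (j:ℝ) := Nat.cast_nonneg j
      nlinarith
    have h2 : (0:ℝ) ≤ 2 * f j - f (j-1) - f (j+1) := by linarith
    positivity

lemma cg_sum (M : ℕ) (hM : 3 ≤ M) (f : ℕ → ℝ)
    (hsum : ∑ i ∈ range M, f i = 1) :
    ∑ j ∈ range M, cg M f j = 1 := by
  have e : ∑ i ∈ range M, f i
      = ∑ i ∈ range M, ∑ j ∈ range M, cg M f j * Vg M j i :=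
    Finset.sum_congr rfl fun i hi => rep M hM f i (mem_range.mp hi)
  rw [hsum] at e
  rw [Finset.sum_comm] at e
  have e2 : ∀ j ∈ range M, ∑ i ∈ range M, cg M f j * Vg M j i = cg M f j := by
    intro j hj
    rw [← Finset.mul_sum, Vg_sum M hM j (mem_range.mp hj), mul_one]
  rw [Finset.sum_congr rfl e2] at e
  exact e.symm

lemma cg_vg (M : ℕ) (hM : 3 ≤ M) (j : ℕ) (hj : j < M) (k : ℕ) (hk : k < M) :
    cg M (Vg M j) k = if k = j then 1 else 0 := by
  have hM3 : (3:ℝ) ≤ (M:ℝ) := by exact_mod_cast hM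
  have hMne : (M:ℝ) ≠ 0 := by linarith
  unfold cg
  split_ifs with h0 h1 h2 h3 h4
  · -- k = 0, k = j so j = 0
    rw [Vg_endpoint1 M hM j hj, if_pos (by omega : j = 0)]
    field_simp
  · -- k = 0, k ≠ j so j ≠ 0
    rw [Vg_endpoint1 M hM j hj, if_neg (by omega : ¬ (j = 0)), mul_zero]
  · -- k = M - 1 = j
    rw [Vg_endpoint0 M hM j hj, if_pos (by omega : j = M - 1)]
    field_simp
  · rw [Vg_endpoint0 M hM j hj, if_neg (by omega : ¬ (j = M - 1)), mul_zero]
  · -- interior k, k = j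
    rw [Vg_secdiff M hM j hj k (by omega) (by omega), if_pos h4]
    subst h4
    have hkne : (k:ℝ) ≠ 0 := Nat.cast_ne_zero.mpr (by omega)
    have hkM : (k:ℝ) + 2 ≤ (M:ℝ) := by exact_mod_cast (by omega : k + 2 ≤ M)
    have hMk : (M:ℝ) - 1 - (k:ℝ) ≠ 0 := by linarith
    field_simp
  · rw [Vg_secdiff M hM j hj k (by omega) (by omega), if_neg h4, zero_mul, zero_div]

lemma cg_congr (M : ℕ) (hM : 3 ≤ M) (f g : ℕ → ℝ) (h : ∀ i < M, f i = g i)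
    (k : ℕ) (hk : k < M) : cg M f k = cg M g k := by
  unfold cg
  split_ifs with h0 h1
  · rw [h (M-1) (by omega)]
  · rw [h 0 (by omega)]
  · rw [h k hk, h (k-1) (by omega), h (k+1) (by omega)]

lemma FV_lt (M : ℕ) (w : Fin M → ℝ) (i : ℕ) (h : i < M) : FV M w i = w ⟨i, h⟩ :=
  dif_pos h

lemma FV_fin (M : ℕ) (w : Fin M → ℝ) (i : Fin M) : FV M w ↑i = w i := by
  rw [FV_lt M w _ i.isLt]

lemma sum_FV (M : ℕ) (w : Fin M → ℝ) :
    ∑ i : Fin M, w i = ∑ i ∈ range M, FV M w i := by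
  rw [← Fin.sum_univ_eq_sum_range (FV M w) M]
  exact Finset.sum_congr rfl fun i _ => (FV_fin M w i).symm

/-- The extreme points of the set of concave probability vectors in `ℝ^M` (`M ≥ 3`) are exactly
the `M` vectors `v_1, …, v_M` described in the paper (0-based indexing: vertex index `j`,
coordinate index `i`). -/
theorem stmt9 (M : ℕ) (hM : 3 ≤ M)
    (S : Set (Fin M → ℝ))
    (hS : S = {w : Fin M → ℝ | ∑ i, w i = 1 ∧ (∀ i, 0 ≤ w i) ∧
        ∀ i : Fin M, ∀ (h1 : 0 < (i : ℕ)) (h2 : (i : ℕ) < M - 1),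
          w ⟨(i : ℕ) - 1, by omega⟩ + w ⟨(i : ℕ) + 1, by omega⟩ ≤ 2 * w i})
    (v : Fin M → (Fin M → ℝ))
    (hv : v = fun (j i : Fin M) =>
      if (j : ℕ) = 0 then
        (2 / ((M : ℝ) * ((M : ℝ) - 1))) * ((i : ℕ) : ℝ)
      else if (j : ℕ) = M - 1 then
        (2 / ((M : ℝ) * ((M : ℝ) - 1))) * ((M : ℝ) - 1 - ((i : ℕ) : ℝ))
      else if (i : ℕ) ≤ (j : ℕ) then
        ((i : ℕ) : ℝ) * (2 / (((M : ℝ) - 1) * ((j : ℕ) : ℝ)))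
      else
        ((M : ℝ) - 1 - ((i : ℕ) : ℝ)) * (2 / (((M : ℝ) - 1) * ((M : ℝ) - 1 - ((j : ℕ) : ℝ))))) :
    S.extremePoints ℝ = Set.range v := by
  have hv' : v = fun (j i : Fin M) => Vg M ↑j ↑i := hv
  clear hv
  -- translation of membership
  have hmem : ∀ w : Fin M → ℝ, w ∈ S ↔
      (∑ i ∈ range M, FV M w i = 1 ∧ (∀ i < M, 0 ≤ FV M w i) ∧
        ∀ k, 0 < k → k < M - 1 → FV M w (k-1) + FV M w (k+1) ≤ 2 * FV M w k) := by
    intro w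
    rw [hS]
    simp only [Set.mem_setOf_eq]
    constructor
    · rintro ⟨h1, h2, h3⟩
      refine ⟨by rw [← sum_FV]; exact h1, fun i hi => by rw [FV_lt M w i hi]; exact h2 _, ?_⟩
      intro k hk0 hk1
      have := h3 ⟨k, by omega⟩ hk0 hk1
      rw [FV_lt M w (k-1) (by omega), FV_lt M w (k+1) (by omega), FV_lt M w k (by omega)]
      exact this
    · rintro ⟨h1, h2, h3⟩
      refine ⟨by rw [sum_FV]; exact h1, fun i => by rw [← FV_fin M w i]; exact h2 _ i.isLt, ?_⟩
      intro i hi1 hi2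
      have := h3 ↑i hi1 hi2
      rw [FV_lt M w (↑i-1) (by omega), FV_lt M w (↑i+1) (by omega),
        FV_lt M w ↑i (by omega)] at this
      convert this using 3
  have hM3 : (3:ℝ) ≤ (M:ℝ) := by exact_mod_cast hM
  -- FV of a combination
  have hFVcomb : ∀ (a b : ℝ) (x y : Fin M → ℝ),
      FV M (a • x + b • y) = fun i => a * FV M x i + b * FV M y i := by
    intro a b x y
    funext i
    unfold FV
    split_ifs with h
    · simp [Pi.add_apply, Pi.smul_apply, smul_eq_mul]
    · ring
  -- each v j belongs to S
  have hvS : ∀ j : Fin M, v j ∈ S := by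
    intro j
    rw [hmem]
    have hFv : ∀ i, i < M → FV M (v j) i = Vg M ↑j i := by
      intro i hi; rw [FV_lt M _ i hi, hv']
    refine ⟨?_, ?_, ?_⟩
    · rw [Finset.sum_congr rfl (fun i hi => hFv i (mem_range.mp hi))]
      exact Vg_sum M hM ↑j j.isLt
    · intro i hi; rw [hFv i hi]; exact Vg_nonneg M hM ↑j j.isLt i hi
    · intro k hk0 hk1
      rw [hFv (k-1) (by omega), hFv (k+1) (by omega), hFv k (by omega)]
      have hs := Vg_secdiff M hM ↑j j.isLt k hk0 hk1
      have hnn : (0:ℝ) ≤ (if k = ↑j then 2 / ((↑j : ℝ) * ((M:ℝ) - 1 - (↑j:ℝ))) else 0) := by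
        split_ifs with h
        · have hj0 : 0 < (j:ℕ) := by omega
          have hjM : ((j:ℕ):ℝ) + 2 ≤ (M:ℝ) := by exact_mod_cast (by omega : (j:ℕ) + 2 ≤ M)
          have h1 : (0:ℝ) < ((j:ℕ):ℝ) := by exact_mod_cast hj0
          have h2 : (0:ℝ) < (M:ℝ) - 1 - ((j:ℕ):ℝ) := by linarith
          positivity
        · exact le_refl 0
      linarith
  -- convexity of S
  have hconv : Convex ℝ S := by
    intro x hx y hy a b ha hb hab
    rw [hmem] at hx hy ⊢
    obtain ⟨hx1, hx2, hx3⟩ := hx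
    obtain ⟨hy1, hy2, hy3⟩ := hy
    simp only [hFVcomb]
    refine ⟨?_, ?_, ?_⟩
    · rw [Finset.sum_add_distrib, ← Finset.mul_sum, ← Finset.mul_sum, hx1, hy1]
      linarith
    · intro i hi
      exact add_nonneg (mul_nonneg ha (hx2 i hi)) (mul_nonneg hb (hy2 i hi))
    · intro k hk0 hk1
      have h1 := hx3 k hk0 hk1
      have h2 := hy3 k hk0 hk1
      nlinarith
  -- S is the convex hull of range v
  have hsub : S ⊆ convexHull ℝ (Set.range v) := by
    intro w hw
    obtain ⟨h1, h2, h3⟩ := (hmem w).mp hw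
    set W : Fin M → ℝ := fun j => cg M (FV M w) ↑j with hW
    have hW0 : ∀ j ∈ (Finset.univ : Finset (Fin M)), 0 ≤ W j :=
      fun j _ => cg_nonneg M hM _ h2 h3 ↑j j.isLt
    have hW1 : ∑ j : Fin M, W j = 1 := by
      rw [hW, Fin.sum_univ_eq_sum_range (fun j => cg M (FV M w) j) M]
      exact cg_sum M hM _ h1
    have hmass := Finset.centerMass_mem_convexHull (Finset.univ : Finset (Fin M)) hW0
      (by rw [hW1]; norm_num) (fun j _ => (Set.mem_range_self j : v j ∈ Set.range v))
    rw [Finset.centerMass_eq_of_sum_1 _ _ hW1] at hmass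
    have hwe : w = ∑ j : Fin M, W j • v j := by
      funext i
      rw [Finset.sum_apply]
      simp only [Pi.smul_apply, smul_eq_mul, hv']
      have hr := rep M hM (FV M w) ↑i i.isLt
      rw [← FV_fin M w i, hr,
        ← Fin.sum_univ_eq_sum_range (fun j => cg M (FV M w) j * Vg M j ↑i) M]
    rw [hwe]
    exact hmass
  have hEq : S = convexHull ℝ (Set.range v) :=
    Set.Subset.antisymm hsub
      (convexHull_min (by rintro _ ⟨j, rfl⟩; exact hvS j) hconv)
  apply Set.Subset.antisymm
  · rw [hEq]; exact extremePoints_convexHull_subset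
  · rintro _ ⟨j, rfl⟩
    refine mem_extremePoints.mpr ⟨hvS j, ?_⟩
    intro x hx y hy hseg
    obtain ⟨a, b, ha, hb, hab, hxy⟩ := hseg
    have hkey : ∀ z : Fin M → ℝ,
        (∀ k, k < M → cg M (FV M z) k = if k = ↑j then 1 else 0) → z = v j := by
      intro z hck
      funext i
      have hr := rep M hM (FV M z) ↑i i.isLt
      rw [FV_fin M z i] at hr
      rw [hr, hv']
      have he : ∀ k ∈ range M, cg M (FV M z) k * Vg M k ↑i
          = if k = ↑j then Vg M ↑j ↑i else 0 := by
        intro k hk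
        rw [hck k (mem_range.mp hk)]
        split_ifs with h
        · rw [h, one_mul]
        · rw [zero_mul]
      rw [Finset.sum_congr rfl he, Finset.sum_ite_eq' (range M) (↑j : ℕ),
        if_pos (mem_range.mpr j.isLt)]
    have hcomb : ∀ k, k < M →
        a * cg M (FV M x) k + b * cg M (FV M y) k = if k = ↑j then 1 else 0 := by
      intro k hk
      have hc1 : cg M (FV M (v j)) k = cg M (Vg M ↑j) k := by
        apply cg_congr M hM _ _ _ k hk
        intro i hi; rw [FV_lt M _ i hi, hv']
      have hc2 : cg M (FV M (v j)) k
          = a * cg M (FV M x) k + b * cg M (FV M y) k := by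
        have hfe : FV M (v j) = fun i => a * FV M x i + b * FV M y i := by
          rw [← hxy]; exact hFVcomb a b x y
        rw [hfe, cg_linear]
      rw [← hc2, hc1, cg_vg M hM ↑j j.isLt k hk]
    obtain ⟨hx1, hx2, hx3⟩ := (hmem x).mp hx
    obtain ⟨hy1, hy2, hy3⟩ := (hmem y).mp hy
    have hxnn := cg_nonneg M hM _ hx2 hx3
    have hynn := cg_nonneg M hM _ hy2 hy3
    have hzero : ∀ k, k < M → k ≠ ↑j →
        cg M (FV M x) k = 0 ∧ cg M (FV M y) k = 0 := by
      intro k hk hkj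
      have hc := hcomb k hk
      rw [if_neg hkj] at hc
      constructor <;> nlinarith [hxnn k hk, hynn k hk]
    have hone : ∀ z : Fin M → ℝ, (∑ i ∈ range M, FV M z i = 1) →
        (∀ k, k < M → k ≠ ↑j → cg M (FV M z) k = 0) →
        ∀ k, k < M → cg M (FV M z) k = if k = ↑j then 1 else 0 := by
      intro z hz hz0 k hk
      split_ifs with h
      · have hsum := cg_sum M hM (FV M z) hz
        have hsingle : ∑ k ∈ range M, cg M (FV M z) k = cg M (FV M z) ↑j := by
          apply Finset.sum_eq_single_of_mem (↑j : ℕ) (mem_range.mpr j.isLt)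
          intro b hb hbj; exact hz0 b (mem_range.mp hb) hbj
        rw [h]
        rw [hsingle] at hsum
        exact hsum
      · exact hz0 k hk h
    exact ⟨hkey x (hone x hx1 (fun k hk hkj => (hzero k hk hkj).1)),
      hkey y (hone y hy1 (fun k hk hkj => (hzero k hk hkj).2))⟩
end

section
/- Let M ≥ 1 and fix k ∈ {1, …, M}. Let 𝒞^{um}_k = {w ∈ ℝ^M : ∑_{i=1}^M w_i = 1, w ≥ 0, w_1 ≤ w_2 ≤ … ≤ w_k, w_k ≥ w_{k+1} ≥ … ≥ w_M} be the set of probability vectors unimodal with mode at position k. Then the set of extreme points of 𝒞^{um}_k is exactly { v^{k₁,k₂} : 1 ≤ k₁ ≤ k ≤ k₂ ≤ M }, where v^{k₁,k₂} ∈ ℝ^M has coordinates v^{k₁,k₂}_i = 1/(k₂ - k₁ + 1) for k₁ ≤ i ≤ k₂ and v^{k₁,k₂}_i = 0 otherwise; in particular 𝒞^{um}_k has exactly k(M-k+1) vertices. -/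
open Finset

set_option maxHeartbeats 1000000

private noncomputable def vvec (M k₁ k₂ : ℕ) : Fin M → ℝ :=
  fun i => if k₁ ≤ (i : ℕ) + 1 ∧ (i : ℕ) + 1 ≤ k₂ then 1 / ((k₂ - k₁ + 1 : ℕ) : ℝ) else 0

private def SS (M k : ℕ) : Set (Fin M → ℝ) :=
  {w | ∑ i, w i = 1 ∧ (∀ i, 0 ≤ w i) ∧
    (∀ i j : Fin M, i ≤ j → (j : ℕ) + 1 ≤ k → w i ≤ w j) ∧
    ∀ i j : Fin M, i ≤ j → k ≤ (i : ℕ) + 1 → w j ≤ w i}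

private lemma sum_ind' (M k₁ k₂ : ℕ) (h1 : 1 ≤ k₁) (h12 : k₁ ≤ k₂) (h2 : k₂ ≤ M) (c : ℝ) :
    ∑ i : Fin M, (if k₁ ≤ (i : ℕ) + 1 ∧ (i : ℕ) + 1 ≤ k₂ then c else 0)
      = ((k₂ - k₁ + 1 : ℕ) : ℝ) * c := by
  rw [Fin.sum_univ_eq_sum_range (fun i => if k₁ ≤ i + 1 ∧ i + 1 ≤ k₂ then c else 0)]
  rw [← Finset.sum_filter]
  have h : (Finset.range M).filter (fun i => k₁ ≤ i + 1 ∧ i + 1 ≤ k₂)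
      = Finset.Ico (k₁ - 1) k₂ := by
    ext i
    simp only [Finset.mem_filter, Finset.mem_range, Finset.mem_Ico]
    omega
  rw [h, Finset.sum_const, Nat.card_Ico, nsmul_eq_mul]
  congr 1
  norm_cast
  omega

private lemma scast_pos (k₁ k₂ : ℕ) : (0 : ℝ) < ((k₂ - k₁ + 1 : ℕ) : ℝ) := by
  exact_mod_cast Nat.succ_pos _

private lemma vvec_memS (M k k₁ k₂ : ℕ) (h1 : 1 ≤ k₁) (hk1 : k₁ ≤ k) (hk2 : k ≤ k₂)
    (h2 : k₂ ≤ M) : vvec M k₁ k₂ ∈ SS M k := by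
  have hs := scast_pos k₁ k₂
  refine ⟨?_, ?_, ?_, ?_⟩
  · have := sum_ind' M k₁ k₂ h1 (hk1.trans hk2) h2 (1 / ((k₂ - k₁ + 1 : ℕ) : ℝ))
    show ∑ i : Fin M, (if k₁ ≤ (i : ℕ) + 1 ∧ (i : ℕ) + 1 ≤ k₂
        then 1 / ((k₂ - k₁ + 1 : ℕ) : ℝ) else 0) = 1
    rw [this]
    field_simp
  · intro i
    show (0:ℝ) ≤ if _ then _ else _
    split_ifs
    · positivity
    · exact le_refl _
  · intro i j hij hjk
    have hij' : (i : ℕ) ≤ j := Fin.le_def.mp hij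
    show (if k₁ ≤ (i : ℕ) + 1 ∧ (i : ℕ) + 1 ≤ k₂ then 1 / ((k₂ - k₁ + 1 : ℕ) : ℝ) else 0)
      ≤ (if k₁ ≤ (j : ℕ) + 1 ∧ (j : ℕ) + 1 ≤ k₂ then 1 / ((k₂ - k₁ + 1 : ℕ) : ℝ) else 0)
    by_cases hi : k₁ ≤ (i : ℕ) + 1 ∧ (i : ℕ) + 1 ≤ k₂
    · rw [if_pos hi, if_pos (by omega)]
    · rw [if_neg hi]
      split_ifs
      · positivity
      · exact le_refl _
  · intro i j hij hik
    have hij' : (i : ℕ) ≤ j := Fin.le_def.mp hij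
    show (if k₁ ≤ (j : ℕ) + 1 ∧ (j : ℕ) + 1 ≤ k₂ then 1 / ((k₂ - k₁ + 1 : ℕ) : ℝ) else 0)
      ≤ (if k₁ ≤ (i : ℕ) + 1 ∧ (i : ℕ) + 1 ≤ k₂ then 1 / ((k₂ - k₁ + 1 : ℕ) : ℝ) else 0)
    by_cases hj : k₁ ≤ (j : ℕ) + 1 ∧ (j : ℕ) + 1 ≤ k₂
    · rw [if_pos hj, if_pos (by omega)]
    · rw [if_neg hj]
      split_ifs
      · positivity
      · exact le_refl _

private lemma vvec_extreme (M k k₁ k₂ : ℕ) (hM : 1 ≤ M) (hk0 : 1 ≤ k) (h1 : 1 ≤ k₁)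
    (hk1 : k₁ ≤ k) (hk2 : k ≤ k₂) (h2 : k₂ ≤ M) :
    vvec M k₁ k₂ ∈ (SS M k).extremePoints ℝ := by
  have hs := scast_pos k₁ k₂
  rw [mem_extremePoints]
  refine ⟨vvec_memS M k k₁ k₂ h1 hk1 hk2 h2, ?_⟩
  rintro x hx y hy ⟨a, b, ha, hb, hab, heq⟩
  obtain ⟨hxs, hxp, hxm1, hxm2⟩ := hx
  obtain ⟨hys, hyp, hym1, hym2⟩ := hy
  set m : Fin M := ⟨k - 1, by omega⟩ with hm
  have hmc : (m : ℕ) = k - 1 := rfl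
  have heqi : ∀ i : Fin M, a * x i + b * y i = vvec M k₁ k₂ i := by
    intro i
    have := congrFun heq i
    simpa using this
  have hzero : ∀ i : Fin M, ¬(k₁ ≤ (i : ℕ) + 1 ∧ (i : ℕ) + 1 ≤ k₂) → x i = 0 ∧ y i = 0 := by
    intro i hi
    have h0 : a * x i + b * y i = 0 := by
      rw [heqi i]
      unfold vvec
      rw [if_neg hi]
    have hx0 := hxp i
    have hy0 := hyp i
    constructor
    · nlinarith
    · nlinarith
  have hval : ∀ i : Fin M, (k₁ ≤ (i : ℕ) + 1 ∧ (i : ℕ) + 1 ≤ k₂) →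
      vvec M k₁ k₂ i = 1 / ((k₂ - k₁ + 1 : ℕ) : ℝ) := by
    intro i hi
    unfold vvec
    rw [if_pos hi]
  have hxc : ∀ i j : Fin M, i ≤ j → (j : ℕ) + 1 ≤ k →
      (k₁ ≤ (i : ℕ) + 1 ∧ (i : ℕ) + 1 ≤ k₂) → x i = x j ∧ y i = y j := by
    intro i j hij hjk hi
    have hij' : (i : ℕ) ≤ j := Fin.le_def.mp hij
    have hj : k₁ ≤ (j : ℕ) + 1 ∧ (j : ℕ) + 1 ≤ k₂ := by omega
    have e : a * x i + b * y i = a * x j + b * y j := by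
      rw [heqi i, heqi j, hval i hi, hval j hj]
    have hxij := hxm1 i j hij hjk
    have hyij := hym1 i j hij hjk
    have e1 : a * x i = a * x j := by nlinarith
    have e2 : b * y i = b * y j := by nlinarith
    exact ⟨mul_left_cancel₀ ha.ne' e1, mul_left_cancel₀ hb.ne' e2⟩
  have hxc2 : ∀ i j : Fin M, i ≤ j → k ≤ (i : ℕ) + 1 →
      (k₁ ≤ (j : ℕ) + 1 ∧ (j : ℕ) + 1 ≤ k₂) → x j = x i ∧ y j = y i := by
    intro i j hij hik hj
    have hij' : (i : ℕ) ≤ j := Fin.le_def.mp hij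
    have hi : k₁ ≤ (i : ℕ) + 1 ∧ (i : ℕ) + 1 ≤ k₂ := by omega
    have e : a * x i + b * y i = a * x j + b * y j := by
      rw [heqi i, heqi j, hval i hi, hval j hj]
    have hxij := hxm2 i j hij hik
    have hyij := hym2 i j hij hik
    have e1 : a * x j = a * x i := by nlinarith
    have e2 : b * y j = b * y i := by nlinarith
    exact ⟨mul_left_cancel₀ ha.ne' e1, mul_left_cancel₀ hb.ne' e2⟩
  have hmsupp : k₁ ≤ (m : ℕ) + 1 ∧ (m : ℕ) + 1 ≤ k₂ := by
    rw [hmc]; omega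
  have hconstm : ∀ i : Fin M, (k₁ ≤ (i : ℕ) + 1 ∧ (i : ℕ) + 1 ≤ k₂) →
      x i = x m ∧ y i = y m := by
    intro i hi
    rcases le_or_gt ((i : ℕ) + 1) k with h | h
    · exact hxc i m (Fin.le_def.mpr (by rw [hmc]; omega)) (by rw [hmc]; omega) hi
    · exact hxc2 m i (Fin.le_def.mpr (by rw [hmc]; omega)) (by rw [hmc]; omega) hi
  have hxif : ∀ i : Fin M,
      x i = (if k₁ ≤ (i : ℕ) + 1 ∧ (i : ℕ) + 1 ≤ k₂ then x m else 0) := by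
    intro i
    split_ifs with h
    · exact (hconstm i h).1
    · exact (hzero i h).1
  have hsumx : ((k₂ - k₁ + 1 : ℕ) : ℝ) * x m = 1 := by
    rw [← sum_ind' M k₁ k₂ h1 (hk1.trans hk2) h2 (x m), ← Finset.sum_congr rfl (fun i _ => hxif i)]
    exact hxs
  have hxmval : x m = 1 / ((k₂ - k₁ + 1 : ℕ) : ℝ) := by
    rw [eq_div_iff hs.ne', mul_comm]; exact hsumx
  have hxv : x = vvec M k₁ k₂ := by
    funext i
    rw [hxif i]
    unfold vvec
    split_ifs with h
    · exact hxmval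
    · rfl
  have hyv : y = vvec M k₁ k₂ := by
    funext i
    have := heqi i
    rw [hxv] at this
    have hb' : b * y i = b * vvec M k₁ k₂ i := by
      linear_combination this - (vvec M k₁ k₂ i) * hab
    exact mul_left_cancel₀ hb.ne' hb'
  exact ⟨hxv, hyv⟩

private lemma extreme_mem (M k : ℕ) (hM : 1 ≤ M) (hk1 : 1 ≤ k) (hk2 : k ≤ M)
    (w : Fin M → ℝ) (hw : w ∈ (SS M k).extremePoints ℝ) :
    ∃ k₁ k₂ : ℕ, 1 ≤ k₁ ∧ k₁ ≤ k ∧ k ≤ k₂ ∧ k₂ ≤ M ∧ w = vvec M k₁ k₂ := by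
  obtain ⟨⟨hsum, hpos, hm1, hm2⟩, hext⟩ := mem_extremePoints.mp hw
  set m : Fin M := ⟨k - 1, by omega⟩ with hm
  have hmc : (m : ℕ) = k - 1 := rfl
  have hmax : ∀ i, w i ≤ w m := by
    intro i
    rcases le_or_gt ((i : ℕ) + 1) k with h | h
    · exact hm1 i m (Fin.le_def.mpr (by rw [hmc]; omega)) (by rw [hmc]; omega)
    · exact hm2 m i (Fin.le_def.mpr (by rw [hmc]; omega)) (by rw [hmc]; omega)
  have hmpos : 0 < w m := by
    by_contra h
    push_neg at h
    have hz : ∀ i, w i = 0 := fun i => le_antisymm (le_trans (hmax i) h) (hpos i)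
    rw [Finset.sum_congr rfl (fun i _ => hz i)] at hsum
    simp at hsum
  set T : Finset (Fin M) := Finset.univ.filter (fun i => 0 < w i) with hT
  have hmT : m ∈ T := by simp [hT, hmpos]
  have hTne : T.Nonempty := ⟨m, hmT⟩
  set A : Fin M := T.min' hTne with hA
  set B : Fin M := T.max' hTne with hB
  have hAT : A ∈ T := T.min'_mem hTne
  have hBT : B ∈ T := T.max'_mem hTne
  have hApos : 0 < w A := by simpa [hT] using hAT
  have hBpos : 0 < w B := by simpa [hT] using hBT
  have hAm : (A : ℕ) ≤ m := Fin.le_def.mp (T.min'_le m hmT)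
  have hmB : (m : ℕ) ≤ B := Fin.le_def.mp (T.le_max' m hmT)
  have hsupp : ∀ i : Fin M, ((A : ℕ) ≤ i ∧ (i : ℕ) ≤ B) → 0 < w i := by
    intro i ⟨hi1, hi2⟩
    rcases le_or_gt ((i : ℕ) + 1) k with h | h
    · exact lt_of_lt_of_le hApos (hm1 A i (Fin.le_def.mpr hi1) h)
    · exact lt_of_lt_of_le hBpos (hm2 i B (Fin.le_def.mpr hi2) (by omega))
  have hsupp0 : ∀ i : Fin M, ¬((A : ℕ) ≤ i ∧ (i : ℕ) ≤ B) → w i = 0 := by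
    intro i hi
    by_contra h
    have hpi : 0 < w i := lt_of_le_of_ne (hpos i) (Ne.symm h)
    have hiT : i ∈ T := by simp [hT, hpi]
    exact hi ⟨Fin.le_def.mp (T.min'_le i hiT), Fin.le_def.mp (T.le_max' i hiT)⟩
  set k₁ : ℕ := (A : ℕ) + 1 with hk₁
  set k₂ : ℕ := (B : ℕ) + 1 with hk₂
  have hb1 : 1 ≤ k₁ := by omega
  have hb2 : k₁ ≤ k := by rw [hk₁]; omega
  have hb3 : k ≤ k₂ := by rw [hk₂]; omega
  have hb4 : k₂ ≤ M := by rw [hk₂]; exact B.isLt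
  refine ⟨k₁, k₂, hb1, hb2, hb3, hb4, ?_⟩
  set u : Fin M → ℝ := vvec M k₁ k₂ with hu
  have huS := vvec_memS M k k₁ k₂ hb1 hb2 hb3 hb4
  obtain ⟨husum, hupos, hum1, hum2⟩ := huS
  have hcond : ∀ i : Fin M, (k₁ ≤ (i : ℕ) + 1 ∧ (i : ℕ) + 1 ≤ k₂) ↔
      ((A : ℕ) ≤ i ∧ (i : ℕ) ≤ B) := by intro i; omega
  have hs := scast_pos k₁ k₂
  have hs1 : (1 : ℝ) ≤ ((k₂ - k₁ + 1 : ℕ) : ℝ) := by exact_mod_cast Nat.succ_le_succ (Nat.zero_le _)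
  have hule : ∀ i : Fin M, u i ≤ 1 := by
    intro i
    show (if _ then _ else _ : ℝ) ≤ 1
    split_ifs
    · rw [div_le_one hs]; linarith
    · norm_num
  have huval : ∀ i : Fin M, ((A : ℕ) ≤ i ∧ (i : ℕ) ≤ B) →
      u i = 1 / ((k₂ - k₁ + 1 : ℕ) : ℝ) := by
    intro i hi
    show (if _ then _ else _ : ℝ) = _
    rw [if_pos ((hcond i).mpr hi)]
  have huval0 : ∀ i : Fin M, ¬((A : ℕ) ≤ i ∧ (i : ℕ) ≤ B) → u i = 0 := by
    intro i hi
    show (if _ then _ else _ : ℝ) = 0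
    rw [if_neg (fun hc => hi ((hcond i).mp hc))]
  set c : ℝ := min (w A) (w B) with hc
  have hcpos : 0 < c := lt_min hApos hBpos
  have hwm1 : w m ≤ 1 := by
    rw [← hsum]
    exact Finset.single_le_sum (fun i _ => hpos i) (Finset.mem_univ m)
  have hc1 : c ≤ 1 := le_trans (le_trans (min_le_left _ _) (hmax A)) hwm1
  have hcle : ∀ i : Fin M, ((A : ℕ) ≤ i ∧ (i : ℕ) ≤ B) → c ≤ w i := by
    intro i ⟨hi1, hi2⟩
    rcases le_or_gt ((i : ℕ) + 1) k with h | h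
    · exact le_trans (min_le_left _ _) (hm1 A i (Fin.le_def.mpr hi1) h)
    · exact le_trans (min_le_right _ _) (hm2 i B (Fin.le_def.mpr hi2) (by omega))
  set x : Fin M → ℝ := fun i => (1 + c) * w i - c * u i with hx
  set y : Fin M → ℝ := fun i => (1 - c) * w i + c * u i with hy
  have hxnn : ∀ i, 0 ≤ x i := by
    intro i
    by_cases hi : (A : ℕ) ≤ i ∧ (i : ℕ) ≤ B
    · have h1 := hcle i hi
      have h2 := hule i
      have h3 := hupos i
      show 0 ≤ (1 + c) * w i - c * u i
      nlinarith
    · show 0 ≤ (1 + c) * w i - c * u i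
      rw [hsupp0 i hi, huval0 i hi]
      ring_nf
      exact le_refl _
  have hynn : ∀ i, 0 ≤ y i := by
    intro i
    show 0 ≤ (1 - c) * w i + c * u i
    have := hpos i
    have := hupos i
    nlinarith
  have hxS : x ∈ SS M k := by
    refine ⟨?_, hxnn, ?_, ?_⟩
    · show ∑ i, ((1 + c) * w i - c * u i) = 1
      rw [Finset.sum_sub_distrib, ← Finset.mul_sum, ← Finset.mul_sum, hsum, husum]
      ring
    · intro i j hij hjk
      by_cases hi : (A : ℕ) ≤ i ∧ (i : ℕ) ≤ B
      · have hij' : (i : ℕ) ≤ j := Fin.le_def.mp hij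
        have hj : (A : ℕ) ≤ j ∧ (j : ℕ) ≤ B := by omega
        have hww := hm1 i j hij hjk
        have huu : u i = u j := by rw [huval i hi, huval j hj]
        show (1 + c) * w i - c * u i ≤ (1 + c) * w j - c * u j
        rw [huu]
        nlinarith
      · have : x i = 0 := by
          show (1 + c) * w i - c * u i = 0
          rw [hsupp0 i hi, huval0 i hi]; ring
        rw [this]
        exact hxnn j
    · intro i j hij hik
      by_cases hj : (A : ℕ) ≤ j ∧ (j : ℕ) ≤ B
      · have hij' : (i : ℕ) ≤ j := Fin.le_def.mp hij
        have hi : (A : ℕ) ≤ i ∧ (i : ℕ) ≤ B := by omega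
        have hww := hm2 i j hij hik
        have huu : u i = u j := by rw [huval i hi, huval j hj]
        show (1 + c) * w j - c * u j ≤ (1 + c) * w i - c * u i
        rw [← huu]
        nlinarith
      · have : x j = 0 := by
          show (1 + c) * w j - c * u j = 0
          rw [hsupp0 j hj, huval0 j hj]; ring
        rw [this]
        exact hxnn i
  have hyS : y ∈ SS M k := by
    refine ⟨?_, hynn, ?_, ?_⟩
    · show ∑ i, ((1 - c) * w i + c * u i) = 1
      rw [Finset.sum_add_distrib, ← Finset.mul_sum, ← Finset.mul_sum, hsum, husum]
      ring
    · intro i j hij hjk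
      by_cases hi : (A : ℕ) ≤ i ∧ (i : ℕ) ≤ B
      · have hij' : (i : ℕ) ≤ j := Fin.le_def.mp hij
        have hj : (A : ℕ) ≤ j ∧ (j : ℕ) ≤ B := by omega
        have hww := hm1 i j hij hjk
        have huu : u i = u j := by rw [huval i hi, huval j hj]
        show (1 - c) * w i + c * u i ≤ (1 - c) * w j + c * u j
        rw [huu]
        nlinarith
      · have : y i = 0 := by
          show (1 - c) * w i + c * u i = 0
          rw [hsupp0 i hi, huval0 i hi]; ring
        rw [this]
        exact hynn j
    · intro i j hij hik
      by_cases hj : (A : ℕ) ≤ j ∧ (j : ℕ) ≤ B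
      · have hij' : (i : ℕ) ≤ j := Fin.le_def.mp hij
        have hi : (A : ℕ) ≤ i ∧ (i : ℕ) ≤ B := by omega
        have hww := hm2 i j hij hik
        have huu : u i = u j := by rw [huval i hi, huval j hj]
        show (1 - c) * w j + c * u j ≤ (1 - c) * w i + c * u i
        rw [← huu]
        nlinarith
      · have : y j = 0 := by
          show (1 - c) * w j + c * u j = 0
          rw [hsupp0 j hj, huval0 j hj]; ring
        rw [this]
        exact hynn i
  have hseg : w ∈ openSegment ℝ x y := by
    refine ⟨1/2, 1/2, by norm_num, by norm_num, by norm_num, ?_⟩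
    funext i
    show (1:ℝ)/2 * ((1 + c) * w i - c * u i) + 1/2 * ((1 - c) * w i + c * u i) = w i
    ring
  obtain ⟨hxw, _⟩ := hext x hxS y hyS hseg
  funext i
  have := congrFun hxw i
  have hcc : (1 + c) * w i - c * u i = w i := this
  have : c * (w i - u i) = 0 := by linarith
  have : w i - u i = 0 := by
    rcases mul_eq_zero.mp this with h | h
    · exact absurd h hcpos.ne'
    · exact h
  linarith

private lemma vvec_pos_cond (M k₁ k₂ : ℕ) (i : Fin M) (h : 0 < vvec M k₁ k₂ i) :
    k₁ ≤ (i : ℕ) + 1 ∧ (i : ℕ) + 1 ≤ k₂ := by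
  by_contra hc
  unfold vvec at h
  rw [if_neg hc] at h
  exact lt_irrefl 0 h

private lemma vvec_pos (M k₁ k₂ : ℕ) (i : Fin M) (h : k₁ ≤ (i : ℕ) + 1 ∧ (i : ℕ) + 1 ≤ k₂) :
    0 < vvec M k₁ k₂ i := by
  unfold vvec
  rw [if_pos h]
  exact div_pos one_pos (scast_pos k₁ k₂)

/-- The extreme points of the set of probability vectors in `ℝ^M` that are unimodal with mode
at (1-based) position `k` are exactly the vectors `v^{k₁,k₂}` (uniform on positions
`k₁,…,k₂` with `1 ≤ k₁ ≤ k ≤ k₂ ≤ M`, zero elsewhere); in particular there are exactly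
`k(M-k+1)` of them. -/
theorem stmt15 (M : ℕ) (hM : 1 ≤ M) (k : ℕ) (hk1 : 1 ≤ k) (hk2 : k ≤ M)
    (S : Set (Fin M → ℝ))
    (hS : S = {w : Fin M → ℝ | ∑ i, w i = 1 ∧ (∀ i, 0 ≤ w i) ∧
        (∀ i j : Fin M, i ≤ j → (j : ℕ) + 1 ≤ k → w i ≤ w j) ∧
        ∀ i j : Fin M, i ≤ j → k ≤ (i : ℕ) + 1 → w j ≤ w i})
    (V : Set (Fin M → ℝ))
    (hV : V = {v : Fin M → ℝ | ∃ k₁ k₂ : ℕ, 1 ≤ k₁ ∧ k₁ ≤ k ∧ k ≤ k₂ ∧ k₂ ≤ M ∧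
        ∀ i : Fin M, v i =
          if k₁ ≤ (i : ℕ) + 1 ∧ (i : ℕ) + 1 ≤ k₂ then 1 / ((k₂ - k₁ + 1 : ℕ) : ℝ) else 0}) :
    S.extremePoints ℝ = V ∧ (S.extremePoints ℝ).ncard = k * (M - k + 1) := by
  have hSS : S = SS M k := hS
  have key : S.extremePoints ℝ = V := by
    rw [hSS, hV]
    ext w
    constructor
    · intro hw
      obtain ⟨k₁, k₂, h1, h2, h3, h4, h5⟩ := extreme_mem M k hM hk1 hk2 w hw
      exact ⟨k₁, k₂, h1, h2, h3, h4, fun i => by rw [h5]; rfl⟩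
    · rintro ⟨k₁, k₂, h1, h2, h3, h4, h5⟩
      have hwv : w = vvec M k₁ k₂ := funext fun i => h5 i
      rw [hwv]
      exact vvec_extreme M k k₁ k₂ hM hk1 h1 h2 h3 h4
  refine ⟨key, ?_⟩
  rw [key, hV]
  have himg : {v : Fin M → ℝ | ∃ k₁ k₂ : ℕ, 1 ≤ k₁ ∧ k₁ ≤ k ∧ k ≤ k₂ ∧ k₂ ≤ M ∧
      ∀ i : Fin M, v i =
        if k₁ ≤ (i : ℕ) + 1 ∧ (i : ℕ) + 1 ≤ k₂ then 1 / ((k₂ - k₁ + 1 : ℕ) : ℝ) else 0}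
      = ↑(Finset.image (fun p : ℕ × ℕ => vvec M p.1 p.2)
          (Finset.Icc 1 k ×ˢ Finset.Icc k M)) := by
    ext v
    simp only [Set.mem_setOf_eq, Finset.coe_image, Set.mem_image, Finset.mem_coe,
      Finset.mem_product, Finset.mem_Icc]
    constructor
    · rintro ⟨k₁, k₂, h1, h2, h3, h4, h5⟩
      exact ⟨(k₁, k₂), ⟨⟨h1, h2⟩, h3, h4⟩, (funext fun i => (h5 i).symm)⟩
    · rintro ⟨⟨k₁, k₂⟩, ⟨⟨h1, h2⟩, h3, h4⟩, rfl⟩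
      exact ⟨k₁, k₂, h1, h2, h3, h4, fun i => rfl⟩
  rw [himg, Set.ncard_coe_finset]
  have hinj : Set.InjOn (fun p : ℕ × ℕ => vvec M p.1 p.2)
      ↑(Finset.Icc 1 k ×ˢ Finset.Icc k M) := by
    rintro ⟨a, b⟩ hab ⟨c, d⟩ hcd heq
    simp only [Finset.coe_product, Set.mem_prod, Finset.mem_coe, Finset.mem_Icc] at hab hcd
    obtain ⟨⟨ha1, ha2⟩, hb1, hb2⟩ := hab
    obtain ⟨⟨hc1, hc2⟩, hd1, hd2⟩ := hcd
    simp only at heq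
    have hab' : a ≤ b := le_trans ha2 hb1
    have hcd' : c ≤ d := le_trans hc2 hd1
    have e1 : c ≤ a ∧ a ≤ d := by
      have hp : 0 < vvec M a b ⟨a - 1, by omega⟩ := vvec_pos M a b _ (by simp; omega)
      rw [heq] at hp
      have := vvec_pos_cond M c d _ hp
      simp at this
      omega
    have e2 : a ≤ c ∧ c ≤ b := by
      have hp : 0 < vvec M c d ⟨c - 1, by omega⟩ := vvec_pos M c d _ (by simp; omega)
      rw [← heq] at hp
      have := vvec_pos_cond M a b _ hp
      simp at this
      omega
    have e3 : c ≤ b ∧ b ≤ d := by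
      have hp : 0 < vvec M a b ⟨b - 1, by omega⟩ := vvec_pos M a b _ (by simp; omega)
      rw [heq] at hp
      have := vvec_pos_cond M c d _ hp
      simp at this
      omega
    have e4 : a ≤ d ∧ d ≤ b := by
      have hp : 0 < vvec M c d ⟨d - 1, by omega⟩ := vvec_pos M c d _ (by simp; omega)
      rw [← heq] at hp
      have := vvec_pos_cond M a b _ hp
      simp at this
      omega
    have : a = c := le_antisymm e2.1 e1.1
    have : b = d := le_antisymm e3.2 e4.2
    exact Prod.ext (by omega) (by omega)
  rw [Finset.card_image_of_injOn hinj, Finset.card_product, Nat.card_Icc, Nat.card_Icc]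
  have h1 : k + 1 - 1 = k := by omega
  have h2 : M + 1 - k = M - k + 1 := by omega
  rw [h1, h2]
end

section
/- (Duality for the finite-dimensional Kiefer–Wolfowitz approximation.) Let X_1,…,X_N ∈ ℝ and μ̂_1 < … < μ̂_M be given, and let φ(t) = (1/√(2π)) exp(-t²/2). Then the optimal value p̂ of the primal problem min_{w ∈ Δ_M} -∑_{i=1}^N log(∑_{j=1}^M w_j φ(X_i - μ̂_j)) equals the optimal value of the dual problem max { ∑_{i=1}^N log ν_i : ν ∈ ℝ^N, ν ≥ 0, ∑_{i=1}^N ν_i φ(X_i - μ̂_j) ≤ N for all j ∈ {1,…,M} }, and both optima are attained. Moreover, any optimal primal solution ŵ and the optimal dual solution ν̂ are linked by ∑_{j=1}^M ŵ_j φ(X_i - μ̂_j) = 1/ν̂_i for every i ∈ {1,…,N}; and if for some j ∈ {1,…,M} the dual constraint is slack, ∑_{i=1}^N ν̂_i φ(X_i - μ̂_j) < N, then ŵ_j = 0. -/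
open Finset

lemma logmid_le {a b : ℝ} (ha : 0 < a) (hb : 0 < b) :
    (Real.log a + Real.log b) / 2 ≤ Real.log ((a + b) / 2) := by
  have hs : Real.sqrt (a * b) ≤ (a + b) / 2 := by
    have h1 : a * b ≤ ((a + b) / 2) ^ 2 := by nlinarith [sq_nonneg (a - b)]
    have := Real.sqrt_le_sqrt h1
    rwa [Real.sqrt_sq (by positivity)] at this
  calc (Real.log a + Real.log b) / 2 = Real.log (Real.sqrt (a * b)) := by
        rw [Real.log_sqrt (by positivity), Real.log_mul ha.ne' hb.ne']
    _ ≤ Real.log ((a + b) / 2) := Real.log_le_log (by positivity) hs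

lemma logmid_lt {a b : ℝ} (ha : 0 < a) (hb : 0 < b) (hne : a ≠ b) :
    (Real.log a + Real.log b) / 2 < Real.log ((a + b) / 2) := by
  have hs : Real.sqrt (a * b) < (a + b) / 2 := by
    have h1 : a * b < ((a + b) / 2) ^ 2 := by
      nlinarith [sq_nonneg (a - b), pow_pos (abs_pos.mpr (sub_ne_zero.mpr hne)) 2, sq_abs (a-b)]
    have := Real.sqrt_lt_sqrt (by positivity) h1
    rwa [Real.sqrt_sq (by positivity)] at this
  calc (Real.log a + Real.log b) / 2 = Real.log (Real.sqrt (a * b)) := by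
        rw [Real.log_sqrt (by positivity), Real.log_mul ha.ne' hb.ne']
    _ < Real.log ((a + b) / 2) := Real.log_lt_log (by positivity) hs

lemma foc {N : ℕ} (a h : Fin N → ℝ) (ha : ∀ i, 0 < a i)
    (H : ∀ t ∈ Set.Ioc (0:ℝ) 1, ∑ i, Real.log (a i + t * h i) ≤ ∑ i, Real.log (a i)) :
    ∑ i, h i / a i ≤ 0 := by
  set g : ℝ → ℝ := fun t => ∑ i, Real.log (a i + t * h i) with hg
  have hd : HasDerivAt g (∑ i, h i / a i) 0 := by
    apply HasDerivAt.fun_sum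
    intro i _
    have h1 : HasDerivAt (fun t : ℝ => a i + t * h i) (h i) 0 := by
      simpa using (hasDerivAt_mul_const (h i)).const_add (a i)
    have h2 := h1.log (by simpa using (ha i).ne')
    simpa using h2
  have hsl := hasDerivAt_iff_tendsto_slope.mp hd
  have hsl' : Filter.Tendsto (slope g 0) (nhdsWithin 0 (Set.Ioi 0)) (nhds (∑ i, h i / a i)) :=
    hsl.mono_left (nhdsWithin_mono 0 (fun t ht => ne_of_gt ht))
  refine le_of_tendsto hsl' ?_
  filter_upwards [Ioc_mem_nhdsGT_of_mem (Set.mem_Ico.mpr ⟨le_refl (0:ℝ), one_pos⟩)] with t ht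
  have hg0 : g 0 = ∑ i, Real.log (a i) := by simp [hg]
  have h4 := H t ht
  rw [slope_def_field]
  have h3 : g t - g 0 ≤ 0 := by rw [hg0]; simpa using h4
  have h5 : (g t - g 0) / (t - 0) ≤ 0 := div_nonpos_of_nonpos_of_nonneg (by simpa using h3) (by linarith [ht.1])
  simpa [div_eq_inv_mul] using h5

/-- Duality for the finite-dimensional Kiefer–Wolfowitz approximation: the discretized primal
and dual problems have equal optimal values, both attained; any optimal primal `wopt` and the
optimal dual `ν̂` satisfy `∑_j wopt_j φ(X_i - μ̂_j) = 1/ν̂_i`, and slack dual constraints force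
`wopt_j = 0`. -/
theorem stmt16 (M N : ℕ) (hM : 0 < M) (hN : 0 < N)
    (X : Fin N → ℝ) (μ : Fin M → ℝ) (hμ : StrictMono μ)
    (φ : ℝ → ℝ) (hφ : φ = fun t => Real.exp (-(t ^ 2) / 2) / Real.sqrt (2 * Real.pi))
    (P : (Fin M → ℝ) → ℝ)
    (hP : P = fun w => -∑ i, Real.log (∑ j, w j * φ (X i - μ j)))
    (simplex : Set (Fin M → ℝ))
    (hsimplex : simplex = {w : Fin M → ℝ | ∑ j, w j = 1 ∧ ∀ j, 0 ≤ w j})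
    (feas : (Fin N → ℝ) → Prop)
    (hfeas : feas = fun ν => (∀ i, 0 < ν i) ∧ ∀ j, ∑ i, ν i * φ (X i - μ j) ≤ (N : ℝ)) :
    ∃ w₀ ∈ simplex, ∃ νopt : Fin N → ℝ,
      (∀ w ∈ simplex, P w₀ ≤ P w) ∧
      feas νopt ∧
      (∀ ν, feas ν → ∑ i, Real.log (ν i) ≤ ∑ i, Real.log (νopt i)) ∧
      P w₀ = ∑ i, Real.log (νopt i) ∧
      ∀ wopt ∈ simplex, (∀ w ∈ simplex, P wopt ≤ P w) →
        ((∀ i, ∑ j, wopt j * φ (X i - μ j) = 1 / νopt i) ∧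
          ∀ j, (∑ i, νopt i * φ (X i - μ j) < (N : ℝ)) → wopt j = 0) := by
  have hφpos : ∀ t, 0 < φ t := by
    intro t; rw [hφ]
    have h2π : 0 < Real.sqrt (2 * Real.pi) := Real.sqrt_pos.mpr (by positivity)
    positivity
  clear hφ
  subst hP hsimplex hfeas
  set S : Set (Fin M → ℝ) := {w : Fin M → ℝ | ∑ j, w j = 1 ∧ ∀ j, 0 ≤ w j} with hS
  set F : (Fin M → ℝ) → Fin N → ℝ := fun w i => ∑ j, w j * φ (X i - μ j) with hF
  have hFpos : ∀ w ∈ S, ∀ i, 0 < F w i := by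
    intro w hw i
    obtain ⟨hw1, hw2⟩ := hw
    have hj : ∃ j, 0 < w j := by
      by_contra hc; push_neg at hc
      have : ∑ j, w j ≤ 0 := Finset.sum_nonpos (fun j _ => hc j)
      rw [hw1] at this; linarith
    obtain ⟨j, hj⟩ := hj
    exact Finset.sum_pos' (fun j' _ => mul_nonneg (hw2 j') (hφpos _).le)
      ⟨j, mem_univ j, mul_pos hj (hφpos _)⟩
  -- compactness and existence of minimizer
  have hcomp : IsCompact S := by
    have : S = stdSimplex ℝ (Fin M) := by
      ext w; simp only [hS, Set.mem_setOf_eq, stdSimplex, and_comm]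
    rw [this]; exact isCompact_stdSimplex _ _
  have hne : S.Nonempty := by
    refine ⟨fun _ => (M:ℝ)⁻¹, ?_, fun j => by positivity⟩
    have : (M:ℝ) ≠ 0 := Nat.cast_ne_zero.mpr hM.ne'
    simp [Finset.sum_const, Finset.card_univ]
    field_simp
  have hcont : ContinuousOn (fun w => -∑ i, Real.log (F w i)) S := by
    intro w hw
    apply ContinuousAt.continuousWithinAt
    apply ContinuousAt.neg
    apply tendsto_finset_sum
    intro i _
    have hc : ContinuousAt (fun w => F w i) w := by
      have : Continuous (fun w : Fin M → ℝ => F w i) :=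
        continuous_finset_sum _ (fun j _ => (continuous_apply j).mul continuous_const)
      exact this.continuousAt
    exact hc.log (hFpos w hw i).ne'
  obtain ⟨w₀, hw₀mem, hw₀min'⟩ := hcomp.exists_isMinOn hne hcont
  have hw₀min : ∀ w ∈ S, -∑ i, Real.log (F w₀ i) ≤ -∑ i, Real.log (F w i) :=
    fun w hw => hw₀min' hw
  have ha : ∀ i, 0 < F w₀ i := hFpos w₀ hw₀mem
  -- KKT / first-order condition
  have KKT : ∀ w ∈ S, ∑ i, F w i / F w₀ i ≤ (N:ℝ) := by
    intro w hw
    have h0 : ∑ i, (F w i - F w₀ i) / F w₀ i ≤ 0 := by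
      apply foc (fun i => F w₀ i) (fun i => F w i - F w₀ i) ha
      intro t ht
      set wt : Fin M → ℝ := fun j => w₀ j + t * (w j - w₀ j) with hwt
      have hwtS : wt ∈ S := by
        constructor
        · have h1 : ∑ j, wt j = ∑ j, (w₀ j + t * (w j - w₀ j)) := rfl
          rw [h1, Finset.sum_add_distrib, ← Finset.mul_sum, Finset.sum_sub_distrib,
            hw₀mem.1, hw.1]; ring
        · intro j
          have h1 : wt j = (1 - t) * w₀ j + t * w j := by simp [hwt]; ring
          rw [h1]
          exact add_nonneg (mul_nonneg (by linarith [ht.2]) (hw₀mem.2 j))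
            (mul_nonneg ht.1.le (hw.2 j))
      have hFt : ∀ i, F wt i = F w₀ i + t * (F w i - F w₀ i) := by
        intro i
        have : F w₀ i + t * (F w i - F w₀ i)
            = ∑ j, (w₀ j * φ (X i - μ j) + t * (w j * φ (X i - μ j) - w₀ j * φ (X i - μ j))) := by
          rw [Finset.sum_add_distrib, ← Finset.mul_sum, Finset.sum_sub_distrib]
        rw [this]
        exact Finset.sum_congr rfl fun j _ => by simp [hwt]; ring
      have hmin := hw₀min wt hwtS
      have : ∑ i, Real.log (F wt i) ≤ ∑ i, Real.log (F w₀ i) := by linarith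
      calc ∑ i, Real.log (F w₀ i + t * (F w i - F w₀ i))
          = ∑ i, Real.log (F wt i) := Finset.sum_congr rfl fun i _ => by rw [hFt i]
        _ ≤ ∑ i, Real.log (F w₀ i) := this
    have h1 : ∑ i, (F w i / F w₀ i - 1) ≤ 0 := by
      refine le_trans (le_of_eq (Finset.sum_congr rfl fun i _ => ?_)) h0
      rw [sub_div, div_self (ha i).ne']
    rw [Finset.sum_sub_distrib, Finset.sum_const, Finset.card_univ, Fintype.card_fin,
      nsmul_eq_mul, mul_one] at h1
    linarith
  -- the dual optimum
  refine ⟨w₀, hw₀mem, fun i => (F w₀ i)⁻¹, fun w hw => hw₀min w hw, ?_, ?_, ?_, ?_⟩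
  · -- feasibility
    refine ⟨fun i => inv_pos.mpr (ha i), fun j => ?_⟩
    have hej : (fun j' => if j' = j then (1:ℝ) else 0) ∈ S :=
      ⟨by simp, fun j' => by dsimp only; split <;> norm_num⟩
    have hk := KKT _ hej
    have hFe : ∀ i, F (fun j' => if j' = j then (1:ℝ) else 0) i = φ (X i - μ j) := by
      intro i
      rw [hF]
      simp [ite_mul]
    calc ∑ i, (F w₀ i)⁻¹ * φ (X i - μ j)
        = ∑ i, F (fun j' => if j' = j then (1:ℝ) else 0) i / F w₀ i := by
          exact Finset.sum_congr rfl fun i _ => by rw [hFe i, div_eq_inv_mul]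
      _ ≤ (N:ℝ) := hk
  · -- dual optimality
    rintro ν ⟨hν, hc⟩
    have h1 : ∑ i, (Real.log (ν i) - Real.log ((F w₀ i)⁻¹)) ≤ ∑ i, (ν i * F w₀ i - 1) := by
      apply Finset.sum_le_sum; intro i _
      rw [Real.log_inv, sub_neg_eq_add, ← Real.log_mul (hν i).ne' (ha i).ne']
      exact Real.log_le_sub_one_of_pos (mul_pos (hν i) (ha i))
    have h2 : ∑ i, ν i * F w₀ i ≤ (N:ℝ) := by
      calc ∑ i, ν i * F w₀ i = ∑ j, w₀ j * ∑ i, ν i * φ (X i - μ j) := by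
            simp only [hF, Finset.mul_sum]
            rw [Finset.sum_comm]
            exact Finset.sum_congr rfl fun j _ => Finset.sum_congr rfl fun i _ => by ring
        _ ≤ ∑ j, w₀ j * (N:ℝ) :=
            Finset.sum_le_sum fun j _ => mul_le_mul_of_nonneg_left (hc j) (hw₀mem.2 j)
        _ = (N:ℝ) := by rw [← Finset.sum_mul, hw₀mem.1, one_mul]
    rw [Finset.sum_sub_distrib] at h1
    rw [Finset.sum_sub_distrib, Finset.sum_const, Finset.card_univ, Fintype.card_fin,
      nsmul_eq_mul, mul_one] at h1
    linarith
  · -- value equality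
    simp [Real.log_inv, Finset.sum_neg_distrib]
    rfl
  · -- complementary slackness
    intro wopt hwopt hmin
    have hb : ∀ i, 0 < F wopt i := hFpos wopt hwopt
    have heqval : ∑ i, Real.log (F wopt i) = ∑ i, Real.log (F w₀ i) := by
      have h1 := hmin w₀ hw₀mem
      have h2 := hw₀min wopt hwopt
      dsimp only at h1
      linarith
    -- midpoint argument
    set mid : Fin M → ℝ := fun j => (w₀ j + wopt j) / 2 with hmid
    have hmidS : mid ∈ S := by
      constructor
      · have : ∑ j, mid j = (∑ j, w₀ j + ∑ j, wopt j) / 2 := by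
          rw [← Finset.sum_add_distrib, Finset.sum_div]
        rw [this, hw₀mem.1, hwopt.1]; norm_num
      · intro j
        have := hw₀mem.2 j; have := hwopt.2 j
        simp only [hmid]; positivity
    have hFmid : ∀ i, F mid i = (F w₀ i + F wopt i) / 2 := by
      intro i
      have : (F w₀ i + F wopt i) / 2
          = ∑ j, ((w₀ j * φ (X i - μ j) + wopt j * φ (X i - μ j)) / 2) := by
        rw [← Finset.sum_div, Finset.sum_add_distrib]
      rw [this]
      exact Finset.sum_congr rfl fun j _ => by simp [hmid]; ring
    have hsum_le : ∑ i, Real.log ((F w₀ i + F wopt i) / 2)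
        ≤ ∑ i, ((Real.log (F w₀ i) + Real.log (F wopt i)) / 2) := by
      have h1 := hw₀min mid hmidS
      have h2 : ∑ i, Real.log (F mid i) ≤ ∑ i, Real.log (F w₀ i) := by linarith
      calc ∑ i, Real.log ((F w₀ i + F wopt i) / 2)
          = ∑ i, Real.log (F mid i) := Finset.sum_congr rfl fun i _ => by rw [hFmid i]
        _ ≤ ∑ i, Real.log (F w₀ i) := h2
        _ = ∑ i, ((Real.log (F w₀ i) + Real.log (F wopt i)) / 2) := by
            rw [← Finset.sum_div, Finset.sum_add_distrib, heqval]; ring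
    have hterm : ∀ i, (Real.log (F w₀ i) + Real.log (F wopt i)) / 2
        = Real.log ((F w₀ i + F wopt i) / 2) := by
      have hge : ∀ i ∈ (univ : Finset (Fin N)),
          (Real.log (F w₀ i) + Real.log (F wopt i)) / 2 ≤ Real.log ((F w₀ i + F wopt i) / 2) :=
        fun i _ => logmid_le (ha i) (hb i)
      have heq := (Finset.sum_eq_sum_iff_of_le hge).mp
        (le_antisymm (Finset.sum_le_sum hge) hsum_le)
      exact fun i => heq i (mem_univ i)
    have hFeq : ∀ i, F wopt i = F w₀ i := by
      intro i
      by_contra hne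
      exact absurd (hterm i) (ne_of_lt (logmid_lt (ha i) (hb i) (fun h => hne h.symm)))
    constructor
    · intro i
      rw [one_div, inv_inv]
      exact hFeq i
    · intro j hj
      have hfeasj : ∀ j', ∑ i, (F w₀ i)⁻¹ * φ (X i - μ j') ≤ (N:ℝ) := by
        intro j'
        have hej : (fun j'' => if j'' = j' then (1:ℝ) else 0) ∈ S :=
          ⟨by simp, fun j'' => by dsimp only; split <;> norm_num⟩
        have hk := KKT _ hej
        have hFe : ∀ i, F (fun j'' => if j'' = j' then (1:ℝ) else 0) i = φ (X i - μ j') := by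
          intro i; rw [hF]; simp [ite_mul]
        calc ∑ i, (F w₀ i)⁻¹ * φ (X i - μ j')
            = ∑ i, F (fun j'' => if j'' = j' then (1:ℝ) else 0) i / F w₀ i :=
              Finset.sum_congr rfl fun i _ => by rw [hFe i, div_eq_inv_mul]
          _ ≤ (N:ℝ) := hk
      have hSsum : ∑ j', wopt j' * ∑ i, (F w₀ i)⁻¹ * φ (X i - μ j') = (N:ℝ) := by
        calc ∑ j', wopt j' * ∑ i, (F w₀ i)⁻¹ * φ (X i - μ j')
            = ∑ i, (F w₀ i)⁻¹ * F wopt i := by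
              simp only [hF, Finset.mul_sum]
              rw [Finset.sum_comm]
              exact Finset.sum_congr rfl fun i _ => Finset.sum_congr rfl fun j' _ => by ring
          _ = ∑ i, (1:ℝ) := Finset.sum_congr rfl fun i _ => by
              rw [hFeq i]; exact inv_mul_cancel₀ (ha i).ne'
          _ = (N:ℝ) := by simp
      have hzero : ∀ j' ∈ (univ : Finset (Fin M)),
          wopt j' * ((N:ℝ) - ∑ i, (F w₀ i)⁻¹ * φ (X i - μ j')) = 0 := by
        apply (Finset.sum_eq_zero_iff_of_nonneg ?_).mp ?_
        · intro j' _
          exact mul_nonneg (hwopt.2 j') (sub_nonneg.mpr (hfeasj j'))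
        · have : ∑ j', wopt j' * ((N:ℝ) - ∑ i, (F w₀ i)⁻¹ * φ (X i - μ j'))
              = (∑ j', wopt j') * (N:ℝ)
                - ∑ j', wopt j' * ∑ i, (F w₀ i)⁻¹ * φ (X i - μ j') := by
            rw [Finset.sum_mul, ← Finset.sum_sub_distrib]
            exact Finset.sum_congr rfl fun j' _ => by ring
          rw [this, hwopt.1, hSsum, one_mul, sub_self]
      have h0 := hzero j (mem_univ j)
      rcases mul_eq_zero.mp h0 with h | h
      · exact h
      · exfalso
        have : ∑ i, (F w₀ i)⁻¹ * φ (X i - μ j) < (N:ℝ) := hj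
        linarith [sub_eq_zero.mp h]
end

section
/- (Primal optimality gap, first bound.) Let X_1,…,X_N ∈ ℝ and grid points μ̂_1 < … < μ̂_M satisfy μ̂_1 ≤ min_i X_i ≤ max_i X_i ≤ μ̂_M, and let φ(t) = (1/√(2π)) exp(-t²/2). Let p̂ be the optimal value of the discretized primal problem min_{w∈Δ_M} -∑_{i=1}^N log(∑_{j=1}^M w_j φ(X_i - μ̂_j)), and let p* = inf_Q -∑_{i=1}^N log ∫_ℝ φ(X_i - μ) dQ(μ), the infimum over all Borel probability measures Q on ℝ. Let ν̂ be an optimal solution of the discretized dual problem max{∑_{i=1}^N log ν_i : ν ≥ 0, ∑_{i=1}^N ν_i φ(X_i - μ̂_j) ≤ N ∀j}, attaining value p̂. If Γ > 0 satisfies Γ ≥ sup_{μ ∈ ℝ} ∑_{i=1}^N ν̂_i φ(X_i - μ), then p* ≤ p̂ ≤ p* + N log(Γ/N). -/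
open Finset MeasureTheory

/-- Primal optimality gap, first bound: if `Γ ≥ sup_μ ∑_i ν̂_i φ(X_i - μ)` for the optimal
discretized dual solution `ν̂` (whose value equals the discretized primal value `p̂`), then
`p* ≤ p̂ ≤ p* + N log(Γ/N)`, where `p*` is the infinite-dimensional Kiefer–Wolfowitz value. -/
theorem stmt17 (M N : ℕ) (hM : 0 < M) (hN : 0 < N)
    (X : Fin N → ℝ) (μ : Fin M → ℝ) (hμ : StrictMono μ)
    (hgrid : ∀ i : Fin N, μ ⟨0, hM⟩ ≤ X i ∧ X i ≤ μ ⟨M - 1, by omega⟩)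
    (φ : ℝ → ℝ) (hφ : φ = fun t => Real.exp (-(t ^ 2) / 2) / Real.sqrt (2 * Real.pi))
    (P : (Fin M → ℝ) → ℝ)
    (hP : P = fun w => -∑ i, Real.log (∑ j, w j * φ (X i - μ j)))
    (phat : ℝ)
    (hphat : phat = sInf (P '' {w : Fin M → ℝ | ∑ j, w j = 1 ∧ ∀ j, 0 ≤ w j}))
    (pstar : ℝ)
    (hpstar : pstar = sInf {r : ℝ | ∃ Q : Measure ℝ, IsProbabilityMeasure Q ∧
        r = -∑ i, Real.log (∫ t, φ (X i - t) ∂Q)})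
    (ν : Fin N → ℝ) (hνpos : ∀ i, 0 < ν i)
    (hνfeas : ∀ j, ∑ i, ν i * φ (X i - μ j) ≤ (N : ℝ))
    (hνopt : ∀ ν' : Fin N → ℝ, (∀ i, 0 < ν' i) →
      (∀ j, ∑ i, ν' i * φ (X i - μ j) ≤ (N : ℝ)) →
      ∑ i, Real.log (ν' i) ≤ ∑ i, Real.log (ν i))
    (hνval : ∑ i, Real.log (ν i) = phat)
    (Γ : ℝ) (hΓpos : 0 < Γ) (hΓ : ∀ t : ℝ, ∑ i, ν i * φ (X i - t) ≤ Γ) :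
    pstar ≤ phat ∧ phat ≤ pstar + (N : ℝ) * Real.log (Γ / N) := by
  have sqrtpos : 0 < Real.sqrt (2 * Real.pi) := Real.sqrt_pos.2 (by positivity)
  have hφpos : ∀ t, 0 < φ t := by
    intro t; rw [hφ]; positivity
  have hφle : ∀ t, φ t ≤ (Real.sqrt (2 * Real.pi))⁻¹ := by
    intro t
    rw [hφ]
    simp only
    rw [div_le_iff₀ sqrtpos, inv_mul_cancel₀ (ne_of_gt sqrtpos)]
    exact Real.exp_le_one_iff.2 (by nlinarith [sq_nonneg t])
  have hφcont : Continuous φ := by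
    rw [hφ]; fun_prop
  -- integrability of φ(X i - ·) w.r.t. any finite measure
  have hint : ∀ (Q : Measure ℝ) (_ : IsFiniteMeasure Q) (i : Fin N),
      Integrable (fun t => φ (X i - t)) Q := by
    intro Q hQ i
    refine Integrable.mono' (integrable_const ((Real.sqrt (2 * Real.pi))⁻¹))
      ((hφcont.comp (continuous_const.sub continuous_id)).aestronglyMeasurable) ?_
    filter_upwards with t
    rw [Real.norm_eq_abs, abs_of_pos (hφpos _)]
    exact hφle _
  -- Key inequality: for every probability measure Q,
  -- phat ≤ -∑ log ∫ φ(X i - t) dQ + N log (Γ/N)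
  have key : ∀ (Q : Measure ℝ), IsProbabilityMeasure Q →
      phat ≤ (-∑ i, Real.log (∫ t, φ (X i - t) ∂Q)) + (N : ℝ) * Real.log (Γ / N) := by
    intro Q hQ
    set g : Fin N → ℝ := fun i => ∫ t, φ (X i - t) ∂Q with hg
    have hgpos : ∀ i, 0 < g i := by
      intro i
      rw [hg]
      rw [integral_pos_iff_support_of_nonneg (fun t => (hφpos _).le) (hint Q inferInstance i)]
      have : Function.support (fun t => φ (X i - t)) = Set.univ := by
        ext t; simp [Function.mem_support, (hφpos (X i - t)).ne']
      rw [this]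
      simp [hQ.measure_univ]
    set a : Fin N → ℝ := fun i => ν i * g i with ha
    have hapos : ∀ i, 0 < a i := fun i => mul_pos (hνpos i) (hgpos i)
    -- ∑ a i ≤ Γ
    have hsumle : ∑ i, a i ≤ Γ := by
      have h1 : ∑ i, a i = ∫ t, (∑ i, ν i * φ (X i - t)) ∂Q := by
        rw [integral_finset_sum _ (fun i _ => ((hint Q inferInstance i).const_mul (ν i)))]
        simp only [ha, hg]
        congr 1; ext i
        rw [integral_const_mul]
      rw [h1]
      calc ∫ t, (∑ i, ν i * φ (X i - t)) ∂Q ≤ ∫ _, Γ ∂Q := by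
            refine integral_mono ?_ (integrable_const _) (fun t => hΓ t)
            exact integrable_finset_sum _ (fun i _ => ((hint Q inferInstance i).const_mul (ν i)))
        _ = Γ := by simp [hQ.measure_univ]
    have hsumpos : 0 < ∑ i, a i := Finset.sum_pos (fun i _ => hapos i) ⟨⟨0, hN⟩, mem_univ _⟩
    have hNpos : (0 : ℝ) < N := Nat.cast_pos.2 hN
    -- concavity of log : ∑ (1/N) log (a i) ≤ log (∑ (1/N) a i)
    have hconc : ∑ i, ((N : ℝ)⁻¹) • Real.log (a i) ≤ Real.log (∑ i, ((N : ℝ)⁻¹) • a i) := by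
      refine strictConcaveOn_log_Ioi.concaveOn.le_map_sum
        (fun i _ => by positivity) ?_ (fun i _ => hapos i)
      simp [Finset.card_univ]
      field_simp
    have hlogsum : ∑ i, Real.log (a i) ≤ (N : ℝ) * Real.log (Γ / N) := by
      have h2 : Real.log (∑ i, ((N : ℝ)⁻¹) • a i) ≤ Real.log (Γ / N) := by
        have : ∑ i, ((N : ℝ)⁻¹) • a i = (∑ i, a i) / N := by
          simp only [smul_eq_mul, ← Finset.mul_sum]; ring
        rw [this]
        exact Real.log_le_log (by positivity) (by gcongr)
      have h3 : ∑ i, ((N : ℝ)⁻¹) • Real.log (a i) = (∑ i, Real.log (a i)) / N := by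
        simp only [smul_eq_mul, ← Finset.mul_sum]; ring
      have := le_trans hconc h2
      rw [h3, div_le_iff₀ hNpos] at this
      linarith
    have hsplit : ∑ i, Real.log (a i) = ∑ i, Real.log (ν i) + ∑ i, Real.log (g i) := by
      rw [← Finset.sum_add_distrib]
      refine Finset.sum_congr rfl (fun i _ => ?_)
      exact Real.log_mul (hνpos i).ne' (hgpos i).ne'
    rw [hsplit, hνval] at hlogsum
    linarith
  -- the pstar feasible set
  set S : Set ℝ := {r : ℝ | ∃ Q : Measure ℝ, IsProbabilityMeasure Q ∧
      r = -∑ i, Real.log (∫ t, φ (X i - t) ∂Q)} with hS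
  have hSne : S.Nonempty := by
    refine ⟨-∑ i, Real.log (∫ t, φ (X i - t) ∂(Measure.dirac 0)), Measure.dirac 0,
      Measure.dirac.isProbabilityMeasure, rfl⟩
  have hSbdd : ∀ r ∈ S, phat - (N : ℝ) * Real.log (Γ / N) ≤ r := by
    rintro r ⟨Q, hQ, rfl⟩
    have := key Q hQ
    linarith
  -- each member of the discretized primal feasible set gives an element of S
  have hmem : ∀ w : Fin M → ℝ, (∑ j, w j = 1 ∧ ∀ j, 0 ≤ w j) → P w ∈ S := by
    rintro w ⟨hw1, hw0⟩
    set Q : Measure ℝ := ∑ j, (ENNReal.ofReal (w j)) • Measure.dirac (μ j) with hQdef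
    have hQ : IsProbabilityMeasure Q := by
      constructor
      rw [hQdef, Measure.finset_sum_apply]
      simp only [Measure.smul_apply, Measure.dirac_apply_of_mem (Set.mem_univ _), smul_eq_mul,
        mul_one]
      rw [← ENNReal.ofReal_sum_of_nonneg (fun j _ => hw0 j), hw1, ENNReal.ofReal_one]
    refine ⟨Q, hQ, ?_⟩
    have hcomp : ∀ i, (∫ t, φ (X i - t) ∂Q) = ∑ j, w j * φ (X i - μ j) := by
      intro i
      rw [hQdef, integral_finset_sum_measure (fun j _ => ?_)]
      · refine Finset.sum_congr rfl (fun j _ => ?_)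
        rw [integral_smul_measure, integral_dirac, ENNReal.toReal_ofReal (hw0 j), smul_eq_mul]
      · exact (hint _ inferInstance i).smul_measure ENNReal.ofReal_lt_top.ne
    rw [hP]
    simp only
    congr 1
    exact Finset.sum_congr rfl (fun i _ => by rw [hcomp i])
  have hΔne : (P '' {w : Fin M → ℝ | ∑ j, w j = 1 ∧ ∀ j, 0 ≤ w j}).Nonempty := by
    refine ⟨P (fun j => if j = ⟨0, hM⟩ then 1 else 0), ⟨_, ⟨?_, fun j => by positivity⟩, rfl⟩⟩
    simp
  -- pstar ≤ phat
  have h1 : pstar ≤ phat := by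
    rw [hphat]
    refine le_csInf hΔne ?_
    rintro b ⟨w, hw, rfl⟩
    rw [hpstar]
    exact csInf_le ⟨phat - (N : ℝ) * Real.log (Γ / N), hSbdd⟩ (hmem w hw)
  have h2 : phat ≤ pstar + (N : ℝ) * Real.log (Γ / N) := by
    have : phat - (N : ℝ) * Real.log (Γ / N) ≤ pstar := by
      rw [hpstar]
      exact le_csInf hSne hSbdd
    linarith
  exact ⟨h1, h2⟩
end

section
/- (Error bound on dual optimal solutions.) Let X_1,…,X_N ∈ ℝ, grid points μ̂_1 < … < μ̂_M, and φ(t) = (1/√(2π)) exp(-t²/2). Let ν̂ ∈ ℝ^N_{>0} be an optimal solution of the discretized dual problem max{∑_{i=1}^N log ν_i : ν ≥ 0, ∑_{i=1}^N ν_i φ(X_i - μ̂_j) ≤ N ∀j}, with optimal value p̂ = ∑_{i=1}^N log ν̂_i. Let ν* ∈ ℝ^N_{>0} be an optimal solution of the infinite-dimensional dual problem, i.e., ∑_{i=1}^N ν*_i φ(X_i - μ) ≤ N for every μ ∈ ℝ and ∑_{i=1}^N log ν*_i = p*, where p* is the optimal value of the infinite-dimensional primal problem. Then ρ( ( ∑_{i=1}^N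 (ν*_i - ν̂_i)²/ν̂_i² )^{1/2} ) ≤ p̂ - p*, where ρ(t) = t - log(1+t); equivalently, ( ∑_{i=1}^N (ν*_i - ν̂_i)²/ν̂_i² )^{1/2} ≤ ρ^{-1}(p̂ - p*) for the inverse of the strictly increasing function ρ on [0,∞). -/
open Finset Set MeasureTheory

private lemma gDeriv (b x : ℝ) (hx1 : -1 < x) (hx2 : x ^ 2 + b ^ 2 ≠ 0) :
    HasDerivAt (fun a => a - Real.log (1 + a)
        - (Real.sqrt (a ^ 2 + b ^ 2) - Real.log (1 + Real.sqrt (a ^ 2 + b ^ 2))))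
      (x * (Real.sqrt (x ^ 2 + b ^ 2) - x) /
        ((1 + x) * (1 + Real.sqrt (x ^ 2 + b ^ 2)))) x := by
  have h1x : (0:ℝ) < 1 + x := by linarith
  set c := Real.sqrt (x ^ 2 + b ^ 2) with hc
  have hcpos : 0 < c := Real.sqrt_pos.2 (lt_of_le_of_ne (by positivity) (Ne.symm hx2))
  have hq : HasDerivAt (fun a : ℝ => a ^ 2 + b ^ 2) (2 * x) x := by
    simpa using (hasDerivAt_pow 2 x).add_const (b ^ 2)
  have hcd : HasDerivAt (fun a : ℝ => Real.sqrt (a ^ 2 + b ^ 2)) (2 * x / (2 * c)) x :=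
    hq.sqrt hx2
  have hl1 : HasDerivAt (fun a : ℝ => Real.log (1 + a)) ((1 + x)⁻¹ * 1) x := by
    exact (Real.hasDerivAt_log h1x.ne').comp x (by simpa using (hasDerivAt_id x).const_add 1)
  have hl2 : HasDerivAt (fun a : ℝ => Real.log (1 + Real.sqrt (a ^ 2 + b ^ 2)))
      ((1 + c)⁻¹ * (2 * x / (2 * c))) x :=
    (Real.hasDerivAt_log (by positivity)).comp x (hcd.const_add 1)
  have := ((hasDerivAt_id x).sub hl1).sub (hcd.sub hl2)
  refine this.congr_deriv ?_
  have h1c : (0:ℝ) < 1 + c := by positivity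
  field_simp
  ring

private lemma keyIneq (b a : ℝ) (hb : 0 ≤ b) (ha : -1 < a) :
    Real.sqrt (a ^ 2 + b ^ 2) - Real.log (1 + Real.sqrt (a ^ 2 + b ^ 2)) ≤
      (a - Real.log (1 + a)) + (b - Real.log (1 + b)) := by
  set g : ℝ → ℝ := fun a => a - Real.log (1 + a)
      - (Real.sqrt (a ^ 2 + b ^ 2) - Real.log (1 + Real.sqrt (a ^ 2 + b ^ 2))) with hg
  have hcont : ∀ x : ℝ, -1 < x → ContinuousAt g x := by
    intro x hx
    have h1 : ContinuousAt (fun a : ℝ => Real.log (1 + a)) x :=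
      (Real.continuousAt_log (by linarith)).comp (by fun_prop)
    have hs : Continuous (fun a : ℝ => Real.sqrt (a ^ 2 + b ^ 2)) := by fun_prop
    have h2 : ContinuousAt (fun a : ℝ => Real.log (1 + Real.sqrt (a ^ 2 + b ^ 2))) x := by
      refine (Real.continuousAt_log ?_).comp (by fun_prop)
      have := Real.sqrt_nonneg (x ^ 2 + b ^ 2); positivity
    exact (continuousAt_id.sub h1).sub (hs.continuousAt.sub h2)
  have hg0 : g 0 = -(b - Real.log (1 + b)) := by
    simp [hg, Real.sqrt_sq hb]
  have main : g 0 ≤ g a := by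
    rcases le_or_gt 0 a with h0a | h0a
    · have hmono : MonotoneOn g (Ici (0:ℝ)) := by
        apply monotoneOn_of_deriv_nonneg (convex_Ici 0)
          (fun x hx => (hcont x (by simp at hx; linarith)).continuousWithinAt)
        · intro x hx
          rw [interior_Ici] at hx
          have hx0 : (0:ℝ) < x := hx
          exact ((gDeriv b x (by linarith) (by positivity)).differentiableAt).differentiableWithinAt
        · intro x hx
          rw [interior_Ici] at hx
          have hx0 : (0:ℝ) < x := hx
          rw [(gDeriv b x (by linarith) (by positivity)).deriv]
          have hc : x ≤ Real.sqrt (x ^ 2 + b ^ 2) := by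
            calc x = Real.sqrt (x ^ 2) := (Real.sqrt_sq hx0.le).symm
            _ ≤ _ := Real.sqrt_le_sqrt (by nlinarith)
          have hcn : 0 ≤ Real.sqrt (x ^ 2 + b ^ 2) := Real.sqrt_nonneg _
          apply div_nonneg
          · nlinarith
          · nlinarith
      exact hmono (by simp) (by simpa using h0a) h0a
    · have hanti : AntitoneOn g (Ioc (-1:ℝ) 0) := by
        apply antitoneOn_of_deriv_nonpos (convex_Ioc (-1) 0)
          (fun x hx => (hcont x hx.1).continuousWithinAt)
        · intro x hx
          rw [interior_Ioc] at hx
          have hxne : x ≠ 0 := ne_of_lt hx.2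
          exact ((gDeriv b x hx.1 (by positivity)).differentiableAt).differentiableWithinAt
        · intro x hx
          rw [interior_Ioc] at hx
          have hxne : x ≠ 0 := ne_of_lt hx.2
          rw [(gDeriv b x hx.1 (by positivity)).deriv]
          have hcn : 0 ≤ Real.sqrt (x ^ 2 + b ^ 2) := Real.sqrt_nonneg _
          have h1x : (0:ℝ) < 1 + x := by linarith [hx.1]
          apply div_nonpos_of_nonpos_of_nonneg
          · nlinarith [hx.2]
          · nlinarith
      exact hanti ⟨ha, h0a.le⟩ (by simp) h0a.le
  rw [hg0] at main
  simp only [hg] at main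
  linarith

private lemma sumKey {n : ℕ} (x : Fin n → ℝ) (hx : ∀ i, -1 < x i) (s : Finset (Fin n)) :
    Real.sqrt (∑ i ∈ s, x i ^ 2) - Real.log (1 + Real.sqrt (∑ i ∈ s, x i ^ 2)) ≤
      ∑ i ∈ s, (x i - Real.log (1 + x i)) := by
  induction s using Finset.cons_induction with
  | empty => simp
  | cons i t hit ih =>
    rw [Finset.sum_cons, Finset.sum_cons]
    set b := Real.sqrt (∑ j ∈ t, x j ^ 2) with hbdef
    have hb : 0 ≤ b := Real.sqrt_nonneg _
    have hb2 : b ^ 2 = ∑ j ∈ t, x j ^ 2 := Real.sq_sqrt (by positivity)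
    have := keyIneq b (x i) hb (hx i)
    rw [hb2] at this
    linarith

open Finset MeasureTheory

/-- Error bound on dual optimal solutions: for the optimal discretized dual solution `ν̂`
(with value `p̂`) and the optimal infinite-dimensional dual solution `ν*` (with value `p*`),
`ρ(‖(ν* - ν̂)/ν̂‖₂) ≤ p̂ - p*` where `ρ(t) = t - log(1+t)`. -/
theorem stmt19 (M N : ℕ) (hM : 0 < M) (hN : 0 < N)
    (X : Fin N → ℝ) (μ : Fin M → ℝ) (hμ : StrictMono μ)
    (φ : ℝ → ℝ) (hφ : φ = fun t => Real.exp (-(t ^ 2) / 2) / Real.sqrt (2 * Real.pi))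
    (ν : Fin N → ℝ) (hνpos : ∀ i, 0 < ν i)
    (hνfeas : ∀ j, ∑ i, ν i * φ (X i - μ j) ≤ (N : ℝ))
    (hνopt : ∀ ν' : Fin N → ℝ, (∀ i, 0 < ν' i) →
      (∀ j, ∑ i, ν' i * φ (X i - μ j) ≤ (N : ℝ)) →
      ∑ i, Real.log (ν' i) ≤ ∑ i, Real.log (ν i))
    (phat : ℝ) (hphat : phat = ∑ i, Real.log (ν i))
    (pstar : ℝ)
    (hpstar : pstar = sInf {r : ℝ | ∃ Q : Measure ℝ, IsProbabilityMeasure Q ∧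
        r = -∑ i, Real.log (∫ t, φ (X i - t) ∂Q)})
    (νs : Fin N → ℝ) (hνspos : ∀ i, 0 < νs i)
    (hνsfeas : ∀ t : ℝ, ∑ i, νs i * φ (X i - t) ≤ (N : ℝ))
    (hνsval : ∑ i, Real.log (νs i) = pstar) :
    Real.sqrt (∑ i, (νs i - ν i) ^ 2 / (ν i) ^ 2)
      - Real.log (1 + Real.sqrt (∑ i, (νs i - ν i) ^ 2 / (ν i) ^ 2)) ≤ phat - pstar := by
  set x : Fin N → ℝ := fun i => (νs i - ν i) / ν i with hxdef
  have hx : ∀ i, -1 < x i := by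
    intro i
    have h : 0 < νs i / ν i := div_pos (hνspos i) (hνpos i)
    have h2 : x i = νs i / ν i - 1 := by
      simp only [hxdef]; field_simp [hxdef, (hνpos i).ne']
    rw [h2]; linarith
  have hsq : ∀ i, (νs i - ν i) ^ 2 / (ν i) ^ 2 = x i ^ 2 := by
    intro i; rw [hxdef]; rw [div_pow]
  have h1x : ∀ i, 1 + x i = νs i / ν i := by
    intro i; simp only [hxdef]; field_simp [hxdef, (hνpos i).ne']; ring
  have hlog : ∀ i, Real.log (1 + x i) = Real.log (νs i) - Real.log (ν i) := by
    intro i; rw [h1x i, Real.log_div (hνspos i).ne' (hνpos i).ne']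
  -- first-order optimality: ∑ x i ≤ 0
  have hsum0 : ∑ i, x i ≤ 0 := by
    set f : ℝ → ℝ := fun L => ∑ i, Real.log (1 + L * x i) with hfdef
    have hfle : ∀ L, 0 < L → L ≤ 1 → f L ≤ 0 := by
      intro L hL0 hL1
      have hpos : ∀ i, 0 < 1 + L * x i := by
        intro i
        have := hx i; nlinarith
      have hfeas : ∀ j, ∑ i, (ν i * (1 + L * x i)) * φ (X i - μ j) ≤ (N : ℝ) := by
        intro j
        have hsplit : ∀ i, (ν i * (1 + L * x i)) * φ (X i - μ j)
            = (1 - L) * (ν i * φ (X i - μ j)) + L * (νs i * φ (X i - μ j)) := by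
          intro i
          have hxi : ν i * x i = νs i - ν i := by
            rw [hxdef]
            exact mul_comm (ν i) _ ▸ div_mul_cancel₀ _ (hνpos i).ne'
          have : ν i * (1 + L * x i) = (1 - L) * ν i + L * νs i := by
            nlinarith [hxi]
          rw [this]; ring
        calc ∑ i, (ν i * (1 + L * x i)) * φ (X i - μ j)
            = (1 - L) * (∑ i, ν i * φ (X i - μ j)) + L * (∑ i, νs i * φ (X i - μ j)) := by
              rw [Finset.mul_sum, Finset.mul_sum, ← Finset.sum_add_distrib]
              exact Finset.sum_congr rfl fun i _ => hsplit i
          _ ≤ (1 - L) * N + L * N := by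
              have h1 := hνfeas j
              have h2 := hνsfeas (μ j)
              have hL1' : (0:ℝ) ≤ 1 - L := by linarith
              nlinarith
          _ = N := by ring
      have := hνopt (fun i => ν i * (1 + L * x i))
        (fun i => mul_pos (hνpos i) (hpos i)) hfeas
      have hlogmul : ∀ i, Real.log (ν i * (1 + L * x i))
          = Real.log (ν i) + Real.log (1 + L * x i) :=
        fun i => Real.log_mul (hνpos i).ne' (hpos i).ne'
      rw [Finset.sum_congr rfl fun i _ => hlogmul i, Finset.sum_add_distrib] at this
      simpa [hfdef] using this
    have hderiv : HasDerivAt f (∑ i, x i) 0 := by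
      apply HasDerivAt.fun_sum
      intro i _
      have hinner : HasDerivAt (fun L : ℝ => 1 + L * x i) (x i) 0 := by
        simpa using ((hasDerivAt_id (0:ℝ)).mul_const (x i)).const_add 1
      have := (Real.hasDerivAt_log (by norm_num : (1:ℝ) + 0 * x i ≠ 0)).comp 0 hinner
      exact this.congr_deriv (by simp)
    have hdw : HasDerivWithinAt f (∑ i, x i) (Set.Ioi 0) 0 := hderiv.hasDerivWithinAt
    rw [hasDerivWithinAt_iff_tendsto_slope,
      Set.diff_singleton_eq_self (by simp : (0:ℝ) ∉ Set.Ioi 0)] at hdw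
    have hf0 : f 0 = 0 := by simp [hfdef]
    refine le_of_tendsto hdw ?_
    have h1 : ∀ᶠ L in nhdsWithin 0 (Set.Ioi 0), L ∈ Set.Ioi (0:ℝ) :=
      eventually_mem_nhdsWithin
    have h2 : ∀ᶠ L in nhdsWithin (0:ℝ) (Set.Ioi 0), L < 1 :=
      eventually_nhdsWithin_of_eventually_nhds (Filter.Tendsto.eventually_lt_const
        (by norm_num) Filter.tendsto_id)
    filter_upwards [h1, h2] with L hL1 hL2
    have hfL : f L ≤ 0 := hfle L hL1 hL2.le
    rw [slope_def_field]
    simp only [hf0, sub_zero]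
    exact div_nonpos_of_nonpos_of_nonneg hfL (le_of_lt hL1)
  -- assemble
  have hkey := sumKey x hx Finset.univ
  have hrw : ∑ i, (νs i - ν i) ^ 2 / (ν i) ^ 2 = ∑ i, x i ^ 2 :=
    Finset.sum_congr rfl fun i _ => hsq i
  rw [hrw]
  have hsplit : ∑ i, (x i - Real.log (1 + x i)) = (∑ i, x i) + (phat - pstar) := by
    rw [Finset.sum_sub_distrib, Finset.sum_congr rfl fun i _ => hlog i,
      Finset.sum_sub_distrib, hphat, hνsval]
    ring
  linarith [hkey, hsplit ▸ hkey]
end
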